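/- arXiv:math/0206181 — 3 statements merged into one kernel-verified Lean document; each statement's English description precedes it below -/
import Mathlib

section
/- Let 1 ≤ p < ∞ and let X be a real Banach space. If there exists a Banach space Y finitely equivalent to X such that the ℓ_p-sum ℓ_p(Y) is finitely equivalent to X, then for every Banach space Z finitely equivalent to X, ℓ_p(Z) is also finitely equivalent to X. -/
open scoped ENNReal ZeroAtInfty

/-- A bundled real Banach space. -/
structure BanachSpace where
  carrier : Type
  [g : NormedAddCommGroup carrier]
  [s : NormedSpace ℝ carrier]
  [c : CompleteSpace carrier]

attribute [instance] BanachSpace.g BanachSpace.s BanachSpace.c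

instance : CoeSort BanachSpace Type := ⟨BanachSpace.carrier⟩

/-- `X` is finitely representable in `Y`: every finite-dimensional subspace of `X` is
`(1+ε)`-isomorphic to a subspace of `Y`. -/
def FinRep (X : Type*) [NormedAddCommGroup X] [NormedSpace ℝ X]
    (Y : Type*) [NormedAddCommGroup Y] [NormedSpace ℝ Y] : Prop :=
  ∀ ε : ℝ, 0 < ε → ∀ A : Subspace ℝ X, FiniteDimensional ℝ A →
    ∃ B : Subspace ℝ Y, ∃ u : A ≃L[ℝ] B,
      ‖(u : A →L[ℝ] B)‖ * ‖(u.symm : B →L[ℝ] A)‖ ≤ 1 + ε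

/-- `X` and `Y` are finitely equivalent. -/
def FinEquiv (X : Type*) [NormedAddCommGroup X] [NormedSpace ℝ X]
    (Y : Type*) [NormedAddCommGroup Y] [NormedSpace ℝ Y] : Prop :=
  FinRep X Y ∧ FinRep Y X

/-!
Finite representability is transitive, so it suffices to show `X ⊑ ℓ_p(Z)` and `ℓ_p(Z) ⊑ X`
(writing `⊑` for finite representability). The first holds because `Z` sits isometrically in
`ℓ_p(Z)` as one coordinate. For the second, `Z ⊑ X ⊑ Y` and finite representability passes to
`ℓ_p`-sums when `p < ∞`: the truncations of `ℓ_p(Z)` to finite sets of coordinates converge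
pointwise to the identity, hence uniformly on the unit ball of a finite-dimensional subspace `A`,
so `A` is almost isometric to one truncation of it; each of those finitely many coordinate images is a
finite-dimensional subspace of `Z`, which is moved almost isometrically into `Y` separately; the
`ℓ_p` norm is then distorted by at most the worst coordinate factor. Finally `ℓ_p(Y) ⊑ X`.
-/

open Filter Topology

section FinRep

variable {X Y W : Type*} [NormedAddCommGroup X] [NormedSpace ℝ X]
  [NormedAddCommGroup Y] [NormedSpace ℝ Y] [NormedAddCommGroup W] [NormedSpace ℝ W]

theorem finRep_iff_exists_linearMap : FinRep X Y ↔
    ∀ ε : ℝ, 0 < ε → ∀ A : Subspace ℝ X, FiniteDimensional ℝ A →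
      ∃ T : A →ₗ[ℝ] Y, ∀ a, ‖a‖ ≤ ‖T a‖ ∧ ‖T a‖ ≤ (1 + ε) * ‖a‖ := by
  refine forall₂_congr fun ε hε => forall₂_congr fun A hA => ⟨?_, ?_⟩
  · rintro ⟨B, u, hu⟩
    -- rescale `u` so that its inverse has norm at most one
    set r := ‖(u.symm : B →L[ℝ] A)‖
    refine ⟨r • B.subtype ∘ₗ (u : A →ₗ[ℝ] B), fun a => ?_⟩
    have hTa : ‖(r • B.subtype ∘ₗ (u : A →ₗ[ℝ] B)) a‖ = r * ‖u a‖ :=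
      norm_smul_of_nonneg (norm_nonneg (u.symm : B →L[ℝ] A)) (u a : Y)
    rw [hTa]
    constructor
    · simpa using (u.symm : B →L[ℝ] A).le_opNorm (u a)
    · calc r * ‖u a‖ ≤ r * (‖(u : A →L[ℝ] B)‖ * ‖a‖) := by
            gcongr; exact (u : A →L[ℝ] B).le_opNorm a
        _ ≤ (1 + ε) * ‖a‖ := by
            rw [← mul_assoc, mul_comm r]; gcongr
  · rintro ⟨T, hT⟩
    have hinj : Function.Injective T := by
      refine (injective_iff_map_eq_zero T).2 fun a ha => norm_le_zero_iff.1 ?_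
      simpa [ha] using (hT a).1
    let e := LinearEquiv.ofInjective T hinj
    have he : ∀ a, ‖e a‖ = ‖T a‖ := fun _ => rfl
    have he_symm : ∀ b, ‖e.symm b‖ ≤ 1 * ‖b‖ := fun b => by
      simpa [← he] using (hT (e.symm b)).1
    let u := e.toContinuousLinearEquivOfBounds (1 + ε) 1 (fun a => he a ▸ (hT a).2) he_symm
    refine ⟨LinearMap.range T, u, ?_⟩
    calc ‖(u : A →L[ℝ] LinearMap.range T)‖ * ‖(u.symm : LinearMap.range T →L[ℝ] A)‖
        ≤ (1 + ε) * 1 := by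
          gcongr
          · exact ContinuousLinearMap.opNorm_le_bound _ (by positivity) fun a => he a ▸ (hT a).2
          · exact ContinuousLinearMap.opNorm_le_bound _ zero_le_one he_symm
      _ = 1 + ε := mul_one _

theorem FinRep.trans (hXY : FinRep X Y) (hYW : FinRep Y W) : FinRep X W := by
  rw [finRep_iff_exists_linearMap] at *
  intro ε hε A hA
  -- split the distortion `1 + ε` evenly between the two steps
  set c := √(1 + ε)
  have hc : 0 < c - 1 := sub_pos.2 (Real.lt_sqrt zero_le_one |>.2 (by linarith))
  obtain ⟨T, hT⟩ := hXY (c - 1) hc A hA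
  obtain ⟨S, hS⟩ := hYW (c - 1) hc (LinearMap.range T) inferInstance
  refine ⟨S ∘ₗ T.rangeRestrict, fun a =>
    ⟨(hT a).1.trans (by simpa using (hS (T.rangeRestrict a)).1), ?_⟩⟩
  calc ‖S (T.rangeRestrict a)‖ ≤ c * ‖T a‖ := by simpa using (hS (T.rangeRestrict a)).2
    _ ≤ c * (c * ‖a‖) := by gcongr; simpa using (hT a).2
    _ = (1 + ε) * ‖a‖ := by rw [← mul_assoc, Real.mul_self_sqrt (by linarith)]

theorem LinearIsometry.finRep (f : X →ₗᵢ[ℝ] Y) : FinRep X Y :=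
  finRep_iff_exists_linearMap.2 fun ε hε A _ =>
    ⟨f.toLinearMap ∘ₗ A.subtype, fun a => by
      simpa using le_mul_of_one_le_left (norm_nonneg a) (by linarith)⟩

end FinRep

theorem ContinuousLinearMap.tendsto_norm_sub_of_tendsto_apply {𝕜 ι V W : Type*}
    [NontriviallyNormedField 𝕜] [CompleteSpace 𝕜] [NormedAddCommGroup V] [NormedSpace 𝕜 V]
    [FiniteDimensional 𝕜 V] [NormedAddCommGroup W] [NormedSpace 𝕜 W] {l : Filter ι}
    {φ : ι → V →L[𝕜] W} {ψ : V →L[𝕜] W} (h : ∀ v, Tendsto (fun i => φ i v) l (𝓝 (ψ v))) :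
    Tendsto (fun i => ‖φ i - ψ‖) l (𝓝 0) := by
  let b := Module.finBasis 𝕜 V
  obtain ⟨C, -, hC⟩ := b.exists_opNorm_le (F := W)
  have hb : Tendsto (fun i => ∑ j, ‖(φ i - ψ) (b j)‖) l (𝓝 0) := by
    simpa using tendsto_finsetSum Finset.univ fun j _ =>
      tendsto_iff_norm_sub_tendsto_zero.1 (h (b j))
  refine squeeze_zero (fun _ => norm_nonneg _) (fun i => hC (by positivity) fun j =>
    Finset.single_le_sum (fun j _ => norm_nonneg ((φ i - ψ) (b j))) (Finset.mem_univ j)) ?_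
  simpa using hb.const_mul C

namespace lp

variable {α : Type*} [DecidableEq α] {E F : α → Type*} [∀ i, NormedAddCommGroup (E i)]
  [∀ i, NormedAddCommGroup (F i)] {p : ℝ≥0∞}

theorem norm_sum_single_le_mul (hp : 0 < p.toReal) {s : Finset α} {f : ∀ i, E i}
    {g : ∀ i, F i} {c : ℝ} (hc : 0 ≤ c) (h : ∀ i ∈ s, ‖g i‖ ≤ c * ‖f i‖) :
    ‖∑ i ∈ s, lp.single p i (g i)‖ ≤ c * ‖∑ i ∈ s, lp.single p i (f i)‖ := by
  refine (Real.rpow_le_rpow_iff (lp.norm_nonneg' _) (mul_nonneg hc (lp.norm_nonneg' _)) hp).1 ?_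
  rw [Real.mul_rpow hc (lp.norm_nonneg' _), lp.norm_sum_single hp, lp.norm_sum_single hp,
    Finset.mul_sum]
  exact Finset.sum_le_sum fun i hi =>
    (Real.rpow_le_rpow (norm_nonneg _) (h i hi) hp.le).trans_eq (Real.mul_rpow hc (norm_nonneg _))

theorem norm_sum_single_le (hp : 0 < p.toReal) (f : lp E p) (s : Finset α) :
    ‖∑ i ∈ s, lp.single p i (f i)‖ ≤ ‖f‖ := by
  refine (Real.rpow_le_rpow_iff (lp.norm_nonneg' _) (lp.norm_nonneg' f) hp).1 ?_
  rw [lp.norm_sum_single hp]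
  exact sum_le_hasSum s (fun i _ => by positivity) (lp.hasSum_norm hp f)

variable [∀ i, NormedSpace ℝ (E i)] [∀ i, NormedSpace ℝ (F i)]

theorem exists_linearMap_norm_sum_single_le (hp : 0 < p.toReal)
    (h : ∀ i, FinRep (E i) (F i)) (A : Subspace ℝ (lp E p)) [FiniteDimensional ℝ A]
    (s : Finset α) {δ : ℝ} (hδ : 0 < δ) :
    ∃ S : A →ₗ[ℝ] lp F p, ∀ a : A,
      ‖∑ i ∈ s, lp.single p i ((a : lp E p) i)‖ ≤ ‖S a‖ ∧
        ‖S a‖ ≤ (1 + δ) * ‖∑ i ∈ s, lp.single p i ((a : lp E p) i)‖ := by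
  let π i : A →ₗ[ℝ] E i := lp.evalₗ E p i ∘ₗ A.subtype
  choose T hT using fun i =>
    finRep_iff_exists_linearMap.1 (h i) δ hδ (LinearMap.range (π i)) inferInstance
  let S : A →ₗ[ℝ] lp F p := ∑ i ∈ s, lp.lsingle p i ∘ₗ T i ∘ₗ (π i).rangeRestrict
  have hS (a : A) : S a = ∑ i ∈ s, lp.single p i (T i ((π i).rangeRestrict a)) := by
    simp [S]
  refine ⟨S, fun a => ⟨?_, ?_⟩⟩
  · simpa only [hS, one_mul] using norm_sum_single_le_mul hp zero_le_one fun i _ => by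
      rw [one_mul]; exact (hT i ((π i).rangeRestrict a)).1
  · rw [hS]
    exact norm_sum_single_le_mul hp (by positivity) fun i _ => (hT i ((π i).rangeRestrict a)).2

variable [Fact (1 ≤ p)]

theorem exists_finset_norm_sub_sum_single_le (hp : p ≠ ∞) (A : Subspace ℝ (lp E p))
    [FiniteDimensional ℝ A] {δ : ℝ} (hδ : 0 < δ) :
    ∃ s : Finset α, ∀ a : A,
      ‖(a : lp E p) - ∑ i ∈ s, lp.single p i ((a : lp E p) i)‖ ≤ δ * ‖a‖ := by
  let P : Finset α → A →L[ℝ] lp E p := fun s =>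
    ∑ i ∈ s, (singleContinuousLinearMap ℝ E p i).comp ((evalCLM ℝ E p i).comp A.subtypeL)
  have hP : ∀ s a, P s a = ∑ i ∈ s, lp.single p i ((a : lp E p) i) := by
    intro s a
    simp only [sum_apply, ContinuousLinearMap.comp_apply,
      Submodule.coe_subtypeL, Submodule.subtype_apply, singleContinuousLinearMap_apply, P]
    rfl
  have hlim : Tendsto (fun s => ‖P s - A.subtypeL‖) atTop (𝓝 0) :=
    ContinuousLinearMap.tendsto_norm_sub_of_tendsto_apply fun a => by
      simp only [hP]
      exact lp.hasSum_single hp (a : lp E p)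
  obtain ⟨s, hs⟩ := (hlim.eventually (ge_mem_nhds hδ)).exists
  refine ⟨s, fun a => ?_⟩
  calc ‖(a : lp E p) - ∑ i ∈ s, lp.single p i ((a : lp E p) i)‖ = ‖(P s - A.subtypeL) a‖ := by
        rw [norm_sub_rev]; simp [hP]
    _ ≤ ‖P s - A.subtypeL‖ * ‖a‖ := ContinuousLinearMap.le_opNorm _ _
    _ ≤ δ * ‖a‖ := by gcongr

theorem finRep_single (i : α) : FinRep (E i) (lp E p) :=
  LinearIsometry.finRep ⟨lp.lsingle p i, lp.norm_single (zero_lt_one.trans_le Fact.out) i⟩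

theorem _root_.FinRep.lpSum (hp : p ≠ ∞) (h : ∀ i, FinRep (E i) (F i)) :
    FinRep (lp E p) (lp F p) := by
  have hp₀ : 0 < p.toReal := ENNReal.toReal_pos (zero_lt_one.trans_le Fact.out).ne' hp
  rw [finRep_iff_exists_linearMap]
  intro ε hε A hA
  set δ := ε / (2 + ε)
  have hδ : 0 < δ := by positivity
  have hδε : 1 + δ = (1 - δ) * (1 + ε) := by
    linear_combination div_mul_cancel₀ ε (by positivity : 2 + ε ≠ 0)
  have hδ1 : 0 < 1 - δ := by nlinarith
  obtain ⟨s, hs⟩ := exists_finset_norm_sub_sum_single_le hp A hδ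
  obtain ⟨S, hS⟩ := exists_linearMap_norm_sum_single_le hp₀ h A s hδ
  refine ⟨(1 - δ)⁻¹ • S, fun a => ?_⟩
  set P := ∑ i ∈ s, lp.single p i ((a : lp E p) i)
  rw [LinearMap.smul_apply, norm_smul_of_nonneg (by positivity), inv_mul_eq_div, le_div_iff₀ hδ1,
    div_le_iff₀ hδ1]
  constructor
  · linarith [(hS a).1, hs a, Submodule.coe_norm a, norm_sub_norm_le (a : lp E p) P]
  · calc ‖S a‖ ≤ (1 + δ) * ‖P‖ := (hS a).2
      _ ≤ (1 + δ) * ‖a‖ := by gcongr; exact norm_sum_single_le hp₀ (a : lp E p) s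
      _ = (1 + ε) * ‖a‖ * (1 - δ) := by rw [hδε]; ring

end lp

theorem lpSum_finEquiv_of_exists_lpSum_finEquiv_general
    (p : ℝ≥0∞) [Fact (1 ≤ p)] (hp : p ≠ ∞)
    (X : Type) [NormedAddCommGroup X] [NormedSpace ℝ X]
    (h : ∃ Y : BanachSpace, FinEquiv X Y.carrier ∧
      FinEquiv X (lp (fun _ : ℕ => Y.carrier) p)) :
    ∀ Z : BanachSpace, FinEquiv X Z.carrier →
      FinEquiv X (lp (fun _ : ℕ => Z.carrier) p) := by
  obtain ⟨Y, hXY, hXlpY⟩ := h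
  intro Z hXZ
  exact ⟨hXZ.1.trans (lp.finRep_single (E := fun _ : ℕ => Z.carrier) 0),
    (FinRep.lpSum hp fun _ => hXZ.2.trans hXY.1).trans hXlpY.2⟩

/-- If some Banach space `Y` finitely equivalent to `X` has `ℓ_p(Y)` finitely equivalent
to `X`, then `ℓ_p(Z)` is finitely equivalent to `X` for every Banach space `Z` finitely
equivalent to `X`. -/
theorem lpSum_finEquiv_of_exists_lpSum_finEquiv
    (p : ℝ≥0∞) [Fact (1 ≤ p)] (hp : p ≠ ∞)
    (X : Type) [NormedAddCommGroup X] [NormedSpace ℝ X] [CompleteSpace X]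
    (h : ∃ Y : BanachSpace, FinEquiv X Y.carrier ∧
      FinEquiv X (lp (fun _ : ℕ => Y.carrier) p)) :
    ∀ Z : BanachSpace, FinEquiv X Z.carrier →
      FinEquiv X (lp (fun _ : ℕ => Z.carrier) p) :=
  lpSum_finEquiv_of_exists_lpSum_finEquiv_general p hp X h
end

section
/- Let (x_n) be a spreading and symmetric sequence in a real Banach space such that for each m the function N_m(a_1,…,a_m) = ‖Σ_{k≤m} a_k x_k‖ is a norm on ℝ^m. Then for any two infinite linearly ordered sets (I,≪) and (J,<') of the same cardinality, the tower spaces X_N(I) and X_N(J) are isometrically isomorphic. -/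
open scoped ENNReal ZeroAtInfty

section Sequences

variable {X : Type*} [NormedAddCommGroup X] [NormedSpace ℝ X]
variable {Y : Type*} [NormedAddCommGroup Y] [NormedSpace ℝ Y]

/-- A spreading sequence. -/
def IsSpreadingSeq (x : ℕ → X) : Prop :=
  ∀ (n : ℕ) (a : Fin n → ℝ) (i j : Fin n → ℕ), StrictMono i → StrictMono j →
    ‖∑ k, a k • x (i k)‖ = ‖∑ k, a k • x (j k)‖

/-- A symmetric sequence. -/
def IsSymmetricSeq (x : ℕ → X) : Prop :=
  ∀ (n : ℕ) (a : Fin n → ℝ) (i : Fin n → ℕ), Function.Injective i →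
    ∀ ς : Equiv.Perm (Fin n), ‖∑ k, a k • x (i k)‖ = ‖∑ k, a (ς k) • x (i k)‖

/-- A 1-unconditional sequence. -/
def IsOneUnconditionalSeq (x : ℕ → X) : Prop :=
  ∀ (n : ℕ) (a ε : Fin n → ℝ), (∀ k, ε k = 1 ∨ ε k = -1) →
    ∀ i : Fin n → ℕ, StrictMono i →
      ‖∑ k, (ε k * a k) • x (i k)‖ = ‖∑ k, a k • x (i k)‖

/-- A subsymmetric sequence: spreading and 1-unconditional. -/
def IsSubsymmetricSeq (x : ℕ → X) : Prop :=
  IsSpreadingSeq x ∧ IsOneUnconditionalSeq x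

/-- `C`-equivalence of two sequences (possibly in different spaces). -/
def SeqEquiv (C : ℝ) (x : ℕ → X) (y : ℕ → Y) : Prop :=
  ∀ (n : ℕ) (a : Fin n → ℝ),
    C⁻¹ * ‖∑ k, a k • x (k : ℕ)‖ ≤ ‖∑ k, a k • y (k : ℕ)‖ ∧
      ‖∑ k, a k • y (k : ℕ)‖ ≤ C * ‖∑ k, a k • x (k : ℕ)‖

end Sequences

/-- `Z` is a realization of the tower space `X_N(I)` built from the spreading sequence `x`:
there is a family `(z_i)_{i ∈ I}` in `Z` with dense linear span whose finite linear
combinations (taken along increasing indices) have the norms prescribed by `x`. -/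
def IsTowerRealization {X : Type*} [NormedAddCommGroup X] [NormedSpace ℝ X] (x : ℕ → X)
    (I : Type*) [LinearOrder I]
    (Z : Type*) [NormedAddCommGroup Z] [NormedSpace ℝ Z] : Prop :=
  ∃ z : I → Z,
    (Submodule.span ℝ (Set.range z)).topologicalClosure = ⊤ ∧
      ∀ (n : ℕ) (a : Fin n → ℝ) (i : Fin n → I), StrictMono i →
        ‖∑ k, a k • z (i k)‖ = ‖∑ k, a k • x (k : ℕ)‖

/-!
For a symmetric sequence the norm of a finite combination `∑ cᵢ • zᵢ` in a tower space does not
depend on how the indices are ordered, only on the family of coefficients. Hence any bijection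
`I ≃ J` carries finite combinations in `X_N(I)` to finite combinations in `X_N(J)` of the same
norm, and this isometry between dense subspaces extends to the completions.
-/

def HasTowerNorms {X : Type*} [NormedAddCommGroup X] [NormedSpace ℝ X] (x : ℕ → X)
    {K : Type*} [LinearOrder K] {Z : Type*} [NormedAddCommGroup Z] [NormedSpace ℝ Z]
    (z : K → Z) : Prop :=
  ∀ (n : ℕ) (a : Fin n → ℝ) (i : Fin n → K), StrictMono i →
    ‖∑ k, a k • z (i k)‖ = ‖∑ k, a k • x (k : ℕ)‖

namespace HasTowerNorms

variable {X : Type*} [NormedAddCommGroup X] [NormedSpace ℝ X] {x : ℕ → X}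
variable {K : Type*} [LinearOrder K] {Z : Type*} [NormedAddCommGroup Z] [NormedSpace ℝ Z]
variable {z : K → Z}

theorem norm_sum_of_injective (hz : HasTowerNorms x z) (hsym : IsSymmetricSeq x)
    {n : ℕ} (a : Fin n → ℝ) {i : Fin n → K} (hi : Function.Injective i) :
    ‖∑ k, a k • z (i k)‖ = ‖∑ k, a k • x (k : ℕ)‖ := by
  set σ := Tuple.sort i
  have hmono : StrictMono (i ∘ σ) :=
    (Tuple.monotone_sort i).strictMono_of_injective (hi.comp σ.injective)
  rw [← Equiv.sum_comp σ]
  exact (hz n (a ∘ σ) (i ∘ σ) hmono).trans (hsym n a (↑) Fin.val_injective σ).symm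

theorem norm_sum_finset_comp (hz : HasTowerNorms x z) (hsym : IsSymmetricSeq x)
    {ι : Type*} {f : ι → K} (hf : Function.Injective f) (s : Finset ι) (c : ι → ℝ) :
    ‖∑ i ∈ s, c i • z (f i)‖ = ‖∑ k : Fin s.card, c (s.equivFin.symm k) • x (k : ℕ)‖ := by
  rw [← Finset.sum_coe_sort s, ← Equiv.sum_comp s.equivFin.symm]
  exact hz.norm_sum_of_injective hsym _
    (hf.comp (Subtype.val_injective.comp s.equivFin.symm.injective))

theorem norm_linearCombination_comp (hz : HasTowerNorms x z) (hsym : IsSymmetricSeq x)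
    {ι : Type*} {f : ι → K} (hf : Function.Injective f) (c : ι →₀ ℝ) :
    ‖Finsupp.linearCombination ℝ (z ∘ f) c‖ =
      ‖∑ k : Fin c.support.card, c (c.support.equivFin.symm k) • x (k : ℕ)‖ := by
  rw [Finsupp.linearCombination_apply, Finsupp.sum]
  exact hz.norm_sum_finset_comp hsym hf c.support c

end HasTowerNorms

theorem Finsupp.denseRange_linearCombination {ι R M : Type*} [Semiring R] [TopologicalSpace M]
    [AddCommMonoid M] [Module R M] [ContinuousAdd M] [ContinuousConstSMul R M] {v : ι → M}
    (hv : (Submodule.span R (Set.range v)).topologicalClosure = ⊤) :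
    DenseRange (Finsupp.linearCombination R v) := by
  rw [DenseRange, ← LinearMap.coe_range, Finsupp.range_linearCombination]
  exact Submodule.dense_iff_topologicalClosure_eq_top.mpr hv

theorem tower_isometric_of_symmetric_general
    (X : Type) [NormedAddCommGroup X] [NormedSpace ℝ X]
    (x : ℕ → X) (hsym : IsSymmetricSeq x)
    (I J : Type) [LinearOrder I] [LinearOrder J]
    (hcard : Cardinal.mk I = Cardinal.mk J)
    (ZI : Type) [NormedAddCommGroup ZI] [NormedSpace ℝ ZI] [CompleteSpace ZI]
    (ZJ : Type) [NormedAddCommGroup ZJ] [NormedSpace ℝ ZJ] [CompleteSpace ZJ]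
    (hZI : IsTowerRealization x I ZI) (hZJ : IsTowerRealization x J ZJ) :
    Nonempty (ZI ≃ₗᵢ[ℝ] ZJ) := by
  obtain ⟨e⟩ := Cardinal.eq.mp hcard
  obtain ⟨zI, hdenseI, hzI : HasTowerNorms x zI⟩ := hZI
  obtain ⟨zJ, hdenseJ, hzJ : HasTowerNorms x zJ⟩ := hZJ
  have hnorm : ∀ c : I →₀ ℝ, ‖Finsupp.linearCombination ℝ zJ (Finsupp.domLCongr (R := ℝ) e c)‖ =
      ‖Finsupp.linearCombination ℝ zI c‖ := fun c => by
    rw [Finsupp.domLCongr_apply, Finsupp.domCongr_apply, Finsupp.linearCombination_equivMapDomain]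
    exact (hzJ.norm_linearCombination_comp hsym e.injective c).trans
      (hzI.norm_linearCombination_comp hsym Function.injective_id c).symm
  exact ⟨(Finsupp.domLCongr e).extendOfIsometry _ _
    (Finsupp.denseRange_linearCombination hdenseI)
    (Finsupp.denseRange_linearCombination hdenseJ) hnorm⟩

/-- If the spreading sequence `x` is symmetric (and generates genuine norms), then any two
tower spaces `X_N(I)`, `X_N(J)` over infinite linearly ordered sets of the same cardinality
are isometrically isomorphic. -/
theorem tower_isometric_of_symmetric
    (X : Type) [NormedAddCommGroup X] [NormedSpace ℝ X] [CompleteSpace X]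
    (x : ℕ → X) (hspread : IsSpreadingSeq x) (hsym : IsSymmetricSeq x)
    (hnorm : ∀ (n : ℕ) (a : Fin n → ℝ), ‖∑ k, a k • x (k : ℕ)‖ = 0 → a = 0)
    (I J : Type) [LinearOrder I] [LinearOrder J] [Infinite I] [Infinite J]
    (hcard : Cardinal.mk I = Cardinal.mk J)
    (ZI : Type) [NormedAddCommGroup ZI] [NormedSpace ℝ ZI] [CompleteSpace ZI]
    (ZJ : Type) [NormedAddCommGroup ZJ] [NormedSpace ℝ ZJ] [CompleteSpace ZJ]
    (hZI : IsTowerRealization x I ZI) (hZJ : IsTowerRealization x J ZJ) :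
    Nonempty (ZI ≃ₗᵢ[ℝ] ZJ) :=
  tower_isometric_of_symmetric_general X x hsym I J hcard ZI ZJ hZI hZJ
end

section
/- Let κ be an uncountable cardinal, and let (x_α)_{α<κ} and (y_α)_{α<κ} be subsymmetric families in real Banach spaces, with X the closed linear span of {x_α : α < κ} and Y the closed linear span of {y_α : α < κ}. If X and Y are isomorphic (there is a linear homeomorphism between them), then the families (x_α)_{α<κ} and (y_α)_{α<κ} are equivalent. -/
open scoped ENNReal ZeroAtInfty

section Families

variable {X : Type*} [NormedAddCommGroup X] [NormedSpace ℝ X]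
variable {Y : Type*} [NormedAddCommGroup Y] [NormedSpace ℝ Y]
variable {I : Type*} [LinearOrder I]

/-- A spreading family indexed by a linearly ordered set. -/
def IsSpreadingFam (x : I → X) : Prop :=
  ∀ (n : ℕ) (a : Fin n → ℝ) (i j : Fin n → I), StrictMono i → StrictMono j →
    ‖∑ k, a k • x (i k)‖ = ‖∑ k, a k • x (j k)‖

/-- A symmetric family indexed by a linearly ordered set. -/
def IsSymmetricFam (x : I → X) : Prop :=
  ∀ (n : ℕ) (a : Fin n → ℝ) (i : Fin n → I), Function.Injective i →
    ∀ ς : Equiv.Perm (Fin n), ‖∑ k, a k • x (i k)‖ = ‖∑ k, a (ς k) • x (i k)‖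

/-- A 1-unconditional family indexed by a linearly ordered set. -/
def IsOneUnconditionalFam (x : I → X) : Prop :=
  ∀ (n : ℕ) (a ε : Fin n → ℝ), (∀ k, ε k = 1 ∨ ε k = -1) →
    ∀ i : Fin n → I, StrictMono i →
      ‖∑ k, (ε k * a k) • x (i k)‖ = ‖∑ k, a k • x (i k)‖

/-- A subsymmetric family: spreading and 1-unconditional. -/
def IsSubsymmetricFam (x : I → X) : Prop :=
  IsSpreadingFam x ∧ IsOneUnconditionalFam x

/-- `C`-equivalence of two families (possibly in different spaces). -/
def FamEquiv (C : ℝ) (x : I → X) (y : I → Y) : Prop :=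
  ∀ (n : ℕ) (a : Fin n → ℝ) (i : Fin n → I), StrictMono i →
    C⁻¹ * ‖∑ k, a k • x (i k)‖ ≤ ‖∑ k, a k • y (i k)‖ ∧
      ‖∑ k, a k • y (i k)‖ ≤ C * ‖∑ k, a k • x (i k)‖

end Families

namespace SubsymProof

variable {E : Type*} [NormedAddCommGroup E] [NormedSpace ℝ E]
variable {I : Type*} [LinearOrder I]

/-- the word norm of a finite word, placed along a fixed base sequence -/
noncomputable def wn (z : I → E) (base : ℕ → I) (n : ℕ) (a : Fin n → ℝ) : ℝ :=
  ‖∑ k, a k • z (base ((k : ℕ)))‖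

section wn

variable {z : I → E} {base : ℕ → I}

set_option linter.unusedSectionVars false

theorem wn_nonneg (n : ℕ) (a : Fin n → ℝ) : 0 ≤ wn z base n a := norm_nonneg _

theorem strictMono_base_fin (hb : StrictMono base) (n : ℕ) : StrictMono (fun k : Fin n => base (k : ℕ)) :=
  fun _ _ h => hb (by exact_mod_cast h)

/-- any strictly monotone placement of a word has the same norm -/
theorem wn_spread (hsp : IsSpreadingFam z) (hb : StrictMono base) {n : ℕ} (a : Fin n → ℝ) {i : Fin n → I} (hi : StrictMono i) :
    ‖∑ k, a k • z (i k)‖ = wn z base n a :=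
  hsp n a i (fun k : Fin n => base (k : ℕ)) hi (strictMono_base_fin hb n)

theorem wn_flip (hun : IsOneUnconditionalFam z) (hb : StrictMono base) {n : ℕ} (a ε : Fin n → ℝ) (hε : ∀ k, ε k = 1 ∨ ε k = -1) :
    wn z base n (fun k => ε k * a k) = wn z base n a :=
  hun n a ε hε _ (strictMono_base_fin hb n)

theorem norm_z_const (hsp : IsSpreadingFam z) (p : I) : ‖z p‖ = ‖z (base 0)‖ := by
  have h1 : ‖∑ k : Fin 1, (1:ℝ) • z ((fun _ => p) k)‖ =
      ‖∑ k : Fin 1, (1:ℝ) • z ((fun _ => base 0) k)‖ := by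
    apply hsp 1 (fun _ => 1) _ _ <;> exact fun a b h => absurd h (by omega)
  simpa using h1

/-- convexity step: replacing one coefficient by `t * a k` with `|t| ≤ 1` -/
theorem wn_update_aux (hun : IsOneUnconditionalFam z) (hb : StrictMono base) {n : ℕ} (a : Fin n → ℝ) (k : Fin n) (t : ℝ) (ht : |t| ≤ 1) :
    wn z base n (Function.update a k (t * a k)) ≤ wn z base n a := by
  classical
  set ε : Fin n → ℝ := fun j => if j = k then -1 else 1 with hεdef
  have hε : ∀ j, ε j = 1 ∨ ε j = -1 := by
    intro j; by_cases h : j = k <;> simp [hεdef, h]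
  have hflip : wn z base n (fun j => ε j * a j) = wn z base n a := wn_flip hun hb a ε hε
  have key : ∑ j, (Function.update a k (t * a k)) j • z (base (j:ℕ)) =
      ((1+t)/2) • ∑ j, a j • z (base (j:ℕ)) +
      ((1-t)/2) • ∑ j, (ε j * a j) • z (base (j:ℕ)) := by
    rw [Finset.smul_sum, Finset.smul_sum, ← Finset.sum_add_distrib]
    apply Finset.sum_congr rfl
    intro j _
    by_cases h : j = k
    · subst h
      rw [Function.update_self]
      simp only [hεdef, if_pos rfl]
      rw [smul_smul, smul_smul, ← add_smul]
      congr 1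
      ring
    · rw [Function.update_of_ne h]
      simp only [hεdef, if_neg h]
      rw [smul_smul, smul_smul, ← add_smul]
      congr 1
      ring
  have h1 : (0:ℝ) ≤ (1+t)/2 := by cases abs_le.mp ht; linarith
  have h2 : (0:ℝ) ≤ (1-t)/2 := by cases abs_le.mp ht; linarith
  calc wn z base n (Function.update a k (t * a k))
      = ‖((1+t)/2) • ∑ j, a j • z (base (j:ℕ)) +
        ((1-t)/2) • ∑ j, (ε j * a j) • z (base (j:ℕ))‖ := by rw [wn, key]
    _ ≤ ((1+t)/2) * wn z base n a + ((1-t)/2) * wn z base n (fun j => ε j * a j) := by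
        refine (norm_add_le _ _).trans ?_
        rw [norm_smul, norm_smul, Real.norm_eq_abs, Real.norm_eq_abs,
          abs_of_nonneg h1, abs_of_nonneg h2]
        exact le_refl _
    _ = wn z base n a := by rw [hflip]; ring

/-- coefficientwise domination (1-unconditionality consequence) -/
theorem wn_mono (hun : IsOneUnconditionalFam z) (hb : StrictMono base) {n : ℕ} (a b : Fin n → ℝ) (hab : ∀ k, |b k| ≤ |a k|) :
    wn z base n b ≤ wn z base n a := by
  classical
  -- replace coordinates one at a time, induction over the finset of replaced coords
  have main : ∀ T : Finset (Fin n),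
      wn z base n (fun k => if k ∈ T then b k else a k) ≤ wn z base n a := by
    intro T
    induction T using Finset.induction_on with
    | empty => simp
    | @insert k T hk ih =>
      set w : Fin n → ℝ := fun j => if j ∈ T then b j else a j with hw
      have hwk : w k = a k := by simp [hw, hk]
      by_cases hz0 : a k = 0
      · -- b k = 0 too, so update with t = 0
        have hbk : b k = 0 := by
          have := hab k; rw [hz0] at this; simpa using (abs_nonpos_iff.mp (by simpa using this))
        have heq : (fun j => if j ∈ insert k T then b j else a j)
            = Function.update w k (0 * w k) := by
          funext j
          by_cases h : j = k
          · subst h; simp [Function.update_self, hbk]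
          · simp [Function.update_of_ne h, hw, h]
        rw [heq]
        exact (wn_update_aux hun hb w k 0 (by norm_num)).trans ih
      · set t : ℝ := b k / a k with htdef
        have ht : |t| ≤ 1 := by
          rw [htdef, abs_div]
          rw [div_le_one (abs_pos.mpr hz0)]
          exact hab k
        have heq : (fun j => if j ∈ insert k T then b j else a j)
            = Function.update w k (t * w k) := by
          funext j
          by_cases h : j = k
          · subst h
            simp only [Function.update_self, hwk, htdef]
            rw [div_mul_cancel₀ _ hz0]
            simp
          · simp [Function.update_of_ne h, hw, h]
        rw [heq]
        exact (wn_update_aux hun hb w k t ht).trans ih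
  have := main Finset.univ
  simpa using this

theorem wn_smul {n : ℕ} (c : ℝ) (a : Fin n → ℝ) :
    wn z base n (fun k => c * a k) = |c| * wn z base n a := by
  have key : ∑ k : Fin n, (c * a k) • z (base (k:ℕ)) = c • ∑ k : Fin n, a k • z (base (k:ℕ)) := by
    rw [Finset.smul_sum]
    exact Finset.sum_congr rfl (fun j _ => (smul_smul c (a j) _).symm)
  rw [wn, wn, key, norm_smul, Real.norm_eq_abs]

theorem wn_triangle_bound (hsp : IsSpreadingFam z) {n : ℕ} (a : Fin n → ℝ) :
    wn z base n a ≤ (∑ k, |a k|) * ‖z (base 0)‖ := by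
  rw [wn, Finset.sum_mul]
  refine (norm_sum_le _ _).trans ?_
  apply Finset.sum_le_sum
  intro k _
  rw [norm_smul, Real.norm_eq_abs, norm_z_const hsp (base (k:ℕ))]

/-- lower coefficient bound -/
theorem wn_coeff_le (hsp : IsSpreadingFam z) (hun : IsOneUnconditionalFam z) (hb : StrictMono base) {n : ℕ} (a : Fin n → ℝ) (k : Fin n) :
    |a k| * ‖z (base 0)‖ ≤ wn z base n a := by
  classical
  -- zero out everything except k
  have main : ∀ T : Finset (Fin n), k ∉ T →
      wn z base n (fun j => if j ∈ T then 0 else a j) ≤ wn z base n a := by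
    intro T
    induction T using Finset.induction_on with
    | empty => intro _; simp
    | @insert m T hm ih =>
      intro hkm
      have hk' : k ∉ T := fun h => hkm (Finset.mem_insert_of_mem h)
      have hkm' : k ≠ m := fun h => hkm (h ▸ Finset.mem_insert_self m T)
      set w : Fin n → ℝ := fun j => if j ∈ T then 0 else a j with hw
      have heq : (fun j => if j ∈ insert m T then 0 else a j)
          = Function.update w m (0 * w m) := by
        funext j
        by_cases h : j = m
        · subst h; simp [Function.update_self]
        · simp [Function.update_of_ne h, hw, h]
      rw [heq]
      exact (wn_update_aux hun hb w m 0 (by norm_num)).trans (ih hk')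
  have h1 := main (Finset.univ.erase k) (Finset.notMem_erase k _)
  have h2 : (fun j => if j ∈ Finset.univ.erase k then 0 else a j)
      = fun j => if j = k then a k else 0 := by
    funext j
    by_cases h : j = k <;> simp [h]
  rw [h2] at h1
  refine le_trans (le_of_eq ?_) h1
  rw [wn]
  have h3 : ∑ j, (if j = k then a k else (0:ℝ)) • z (base (j:ℕ))
      = a k • z (base (k:ℕ)) := by
    rw [Finset.sum_eq_single k]
    · simp
    · intro b _ hbk; simp [hbk]
    · intro h; exact absurd (Finset.mem_univ k) h
  rw [h3, norm_smul, Real.norm_eq_abs, norm_z_const hsp (base (k:ℕ))]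

end wn


section fc

variable {z : I → E} {base : ℕ → I}

set_option linter.unusedSectionVars false

/-- finite combination over a finset -/
noncomputable def fc (z : I → E) (F : Finset I) (co : I → ℝ) : E := ∑ p ∈ F, co p • z p

theorem fc_strictMono (F : Finset I) :
    StrictMono (fun k : Fin F.card => ((F.orderIsoOfFin rfl k : F) : I)) := by
  intro k l hkl
  exact (F.orderIsoOfFin rfl).strictMono hkl

theorem fc_reading (z : I → E) (F : Finset I) (co : I → ℝ) :
    fc z F co = ∑ k : Fin F.card, co ((F.orderIsoOfFin rfl k : F) : I) •
      z ((F.orderIsoOfFin rfl k : F) : I) := by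
  rw [fc, ← Finset.sum_coe_sort F (fun p => co p • z p)]
  exact (Equiv.sum_comp (F.orderIsoOfFin rfl).toEquiv (fun p : F => co (p:I) • z (p:I))).symm

theorem fc_norm (hsp : IsSpreadingFam z) (hb : StrictMono base) (F : Finset I) (co : I → ℝ) :
    ‖fc z F co‖ = wn z base F.card (fun k => co ((F.orderIsoOfFin rfl k : F) : I)) := by
  rw [fc_reading]
  exact wn_spread hsp hb _ (fc_strictMono F)

/-- coefficientwise comparison of finite combinations -/
theorem fc_mono (hsp : IsSpreadingFam z) (hun : IsOneUnconditionalFam z) (hb : StrictMono base)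
    (F : Finset I) (co co' : I → ℝ) (h : ∀ p ∈ F, |co' p| ≤ |co p|) :
    ‖fc z F co'‖ ≤ ‖fc z F co‖ := by
  rw [fc_norm hsp hb, fc_norm hsp hb]
  apply wn_mono hun hb
  intro k
  exact h _ (Finset.coe_mem _)

theorem fc_mask (S F : Finset I) (h : S ⊆ F) (co : I → ℝ) :
    fc z S co = fc z F (fun q => if q ∈ S then co q else 0) := by
  classical
  rw [fc, fc]
  have : ∑ p ∈ F, (if p ∈ S then co p else 0) • z p
      = ∑ p ∈ F, (if p ∈ S then co p • z p else 0) := by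
    apply Finset.sum_congr rfl
    intro p _
    by_cases hp : p ∈ S <;> simp [hp]
  rw [this, Finset.sum_ite_mem, Finset.inter_eq_right.mpr h]

/-- dropping to a subset of the support decreases the norm -/
theorem fc_subset_le (hsp : IsSpreadingFam z) (hun : IsOneUnconditionalFam z)
    (hb : StrictMono base) {S F : Finset I} (h : S ⊆ F) (co : I → ℝ) :
    ‖fc z S co‖ ≤ ‖fc z F co‖ := by
  classical
  rw [fc_mask S F h co]
  apply fc_mono hsp hun hb
  intro p _
  by_cases hp : p ∈ S <;> simp [hp]

theorem fc_coeff_le (hsp : IsSpreadingFam z) (hun : IsOneUnconditionalFam z)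
    (hb : StrictMono base) {F : Finset I} {p : I} (hp : p ∈ F) (co : I → ℝ) :
    |co p| * ‖z (base 0)‖ ≤ ‖fc z F co‖ := by
  have h1 : ‖fc z {p} co‖ ≤ ‖fc z F co‖ :=
    fc_subset_le hsp hun hb (Finset.singleton_subset_iff.mpr hp) co
  have h2 : ‖fc z {p} co‖ = |co p| * ‖z (base 0)‖ := by
    rw [fc, Finset.sum_singleton, norm_smul, Real.norm_eq_abs, norm_z_const hsp p]
  rw [← h2]; exact h1

/-- the fundamental function -/
noncomputable def lam (z : I → E) (base : ℕ → I) (k : ℕ) : ℝ := wn z base k (fun _ => 1)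

theorem fc_le_lam (hsp : IsSpreadingFam z) (hun : IsOneUnconditionalFam z)
    (hb : StrictMono base) (F : Finset I) (co : I → ℝ) (M : ℝ)
    (hM : ∀ p ∈ F, |co p| ≤ M) :
    ‖fc z F co‖ ≤ M * lam z base F.card := by
  rcases Finset.eq_empty_or_nonempty F with hF | ⟨q, hq⟩
  · subst hF; show ‖fc z ∅ co‖ ≤ M * lam z base 0; simp [fc, lam, wn]
  · have hM0 : 0 ≤ M := le_trans (abs_nonneg _) (hM q hq)
    have h1 : ‖fc z F co‖ ≤ ‖fc z F (fun _ => M)‖ :=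
      fc_mono hsp hun hb F (fun _ => M) co
        (fun p hp => by simpa [abs_of_nonneg hM0] using hM p hp)
    refine h1.trans (le_of_eq ?_)
    rw [fc_norm hsp hb]
    have e1 : (fun k : Fin F.card => ((fun _ : I => M) (((F.orderIsoOfFin rfl) k : F) : I)))
        = (fun k : Fin F.card => M * (fun _ : Fin F.card => (1:ℝ)) k) := by
      funext k; simp
    calc wn z base F.card (fun k => (fun _ : I => M) (((F.orderIsoOfFin rfl) k : F) : I))
        = wn z base F.card (fun k => M * (fun _ : Fin F.card => (1:ℝ)) k) := by rw [e1]
      _ = |M| * wn z base F.card (fun _ => 1) := wn_smul M _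
      _ = M * lam z base F.card := by rw [abs_of_nonneg hM0, lam]

theorem fc_union {F G : Finset I} (hd : Disjoint F G) (co : I → ℝ) :
    fc z (F ∪ G) co = fc z F co + fc z G co := by
  rw [fc, fc, fc, Finset.sum_union hd]

end fc


section coord

variable {Y : Type*} [NormedAddCommGroup Y] [NormedSpace ℝ Y] [CompleteSpace Y]
variable {I : Type*} [LinearOrder I]
variable {y : I → Y} {base : ℕ → I}

set_option linter.unusedSectionVars false

theorem linInd_of_subsym (hsp : IsSpreadingFam y) (hun : IsOneUnconditionalFam y)
    (hb : StrictMono base) (hd : 0 < ‖y (base 0)‖) :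
    LinearIndependent ℝ y := by
  rw [linearIndependent_iff']
  intro s g hsum p hp
  have h1 : |g p| * ‖y (base 0)‖ ≤ ‖fc y s g‖ := fc_coeff_le hsp hun hb hp g
  rw [show fc y s g = ∑ i ∈ s, g i • y i from rfl, hsum, norm_zero] at h1
  have h2 : |g p| = 0 := le_antisymm (by nlinarith [abs_nonneg (g p)]) (abs_nonneg _)
  exact abs_eq_zero.mp h2

theorem span_rep {w : Y} (hw : w ∈ Submodule.span ℝ (Set.range y)) :
    ∃ (G : Finset I) (co : I → ℝ), w = fc y G co := by
  rw [Finsupp.mem_span_range_iff_exists_finsupp] at hw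
  obtain ⟨c, hc⟩ := hw
  exact ⟨c.support, c, by rw [← hc]; rfl⟩

/-- existence of biorthogonal coordinate functionals -/
theorem exists_psi (hsp : IsSpreadingFam y) (hun : IsOneUnconditionalFam y)
    (hb : StrictMono base) (hd : 0 < ‖y (base 0)‖)
    (hys : (Submodule.span ℝ (Set.range y)).topologicalClosure = ⊤) :
    ∃ psi : I → (Y →L[ℝ] ℝ),
      (∀ p q, psi p (y q) = if p = q then 1 else 0) ∧
      (∀ p w, |psi p w| ≤ (1 / ‖y (base 0)‖) * ‖w‖) := by
  classical
  set d := ‖y (base 0)‖ with hddef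
  have hli : LinearIndependent ℝ y := linInd_of_subsym hsp hun hb hd
  set b := Module.Basis.span hli with hbdef
  have hdense : Dense ((Submodule.span ℝ (Set.range y) : Submodule ℝ Y) : Set Y) :=
    Submodule.dense_iff_topologicalClosure_eq_top.mpr hys
  have hdr : DenseRange ⇑(Submodule.span ℝ (Set.range y)).subtypeL := by
    have : ⇑(Submodule.span ℝ (Set.range y)).subtypeL
        = (Subtype.val : (Submodule.span ℝ (Set.range y)) → Y) := rfl
    rw [DenseRange, this, Subtype.range_coe]
    exact hdense
  have hui : IsUniformInducing ⇑(Submodule.span ℝ (Set.range y)).subtypeL :=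
    isometry_subtype_coe.isUniformInducing
  -- coefficient bound for the coordinate functionals on the span
  have coordBound : ∀ (p : I) (v : Submodule.span ℝ (Set.range y)),
      ‖(b.coord p) v‖ ≤ (1 / d) * ‖v‖ := by
    intro p v
    set c := b.repr v with hcdef
    have hval : (v : Y) = fc y c.support c := by
      have h0 : (Finsupp.linearCombination ℝ ⇑b) c = v := b.linearCombination_repr v
      have h1 : ((Finsupp.linearCombination ℝ ⇑b) c : Y) = ∑ q ∈ c.support, c q • y q := by
        rw [Finsupp.linearCombination_apply, Finsupp.sum, Submodule.coe_sum]
        apply Finset.sum_congr rfl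
        intro q _
        rw [Submodule.coe_smul, Module.Basis.span_apply]
      rw [← h0, h1]; rfl
    have hcoord : (b.coord p) v = c p := by rw [Module.Basis.coord_apply]
    by_cases hp : p ∈ c.support
    · have h2 : |c p| * d ≤ ‖fc y c.support c‖ := fc_coeff_le hsp hun hb hp c
      rw [← hval] at h2
      have h3 : ‖(v : Y)‖ = ‖v‖ := rfl
      rw [h3] at h2
      rw [hcoord, Real.norm_eq_abs]
      rw [div_mul_eq_mul_div, le_div_iff₀ hd, one_mul]
      linarith [h2]
    · rw [hcoord, Finsupp.notMem_support_iff.mp hp]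
      simp only [norm_zero]
      positivity
  set psi0 : I → (Submodule.span ℝ (Set.range y)) →L[ℝ] ℝ :=
    fun p => LinearMap.mkContinuous (b.coord p) (1/d) (coordBound p) with hpsi0
  refine ⟨fun p => (psi0 p).extend (Submodule.span ℝ (Set.range y)).subtypeL, ?_, ?_⟩
  · intro p q
    have hmem : y q ∈ Submodule.span ℝ (Set.range y) :=
      Submodule.subset_span (Set.mem_range_self q)
    have happ : (Submodule.span ℝ (Set.range y)).subtypeL ⟨y q, hmem⟩ = y q := rfl
    rw [← happ, ContinuousLinearMap.extend_eq _ hdr hui]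
    have hbq : b q = ⟨y q, hmem⟩ := Module.Basis.span_apply hli q
    have : psi0 p ⟨y q, hmem⟩ = (b.coord p) ⟨y q, hmem⟩ := rfl
    rw [this, ← hbq, Module.Basis.coord_apply, Module.Basis.repr_self_apply]
    by_cases h : p = q
    · subst h; simp
    · simp [h, Ne.symm h]
  · intro p w
    have hn0 : ‖psi0 p‖ ≤ 1/d :=
      LinearMap.mkContinuous_norm_le _ (by positivity) _
    have hext : ‖(psi0 p).extend (Submodule.span ℝ (Set.range y)).subtypeL‖
        ≤ (1:NNReal) * ‖psi0 p‖ := by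
      apply ContinuousLinearMap.opNorm_extend_le _ hdr
      intro v
      have : ‖(Submodule.span ℝ (Set.range y)).subtypeL v‖ = ‖v‖ := rfl
      rw [this, NNReal.coe_one, one_mul]
    rw [NNReal.coe_one, one_mul] at hext
    calc |((psi0 p).extend (Submodule.span ℝ (Set.range y)).subtypeL) w|
        ≤ ‖(psi0 p).extend (Submodule.span ℝ (Set.range y)).subtypeL‖ * ‖w‖ :=
          ((psi0 p).extend _).le_opNorm w
      _ ≤ (1/d) * ‖w‖ := by
          apply mul_le_mul_of_nonneg_right (hext.trans hn0) (norm_nonneg w)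

end coord


section proj

variable {Y : Type*} [NormedAddCommGroup Y] [NormedSpace ℝ Y] [CompleteSpace Y]
variable {I : Type*} [LinearOrder I]
variable {y : I → Y} {base : ℕ → I} {psi : I → Y →L[ℝ] ℝ}

set_option linter.unusedSectionVars false

/-- the canonical projection onto a finite set of coordinates -/
noncomputable def Pj (y : I → Y) (psi : I → Y →L[ℝ] ℝ) (F : Finset I) (w : Y) : Y :=
  fc y F (fun p => psi p w)

theorem fc_congr {z : I → Y} (F : Finset I) {co co' : I → ℝ} (h : ∀ p ∈ F, co p = co' p) :
    fc z F co = fc z F co' :=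
  Finset.sum_congr rfl (fun p hp => by rw [h p hp])

theorem psi_fc (hbio : ∀ p q, psi p (y q) = if p = q then 1 else 0)
    (p : I) (G : Finset I) (co : I → ℝ) :
    psi p (fc y G co) = if p ∈ G then co p else 0 := by
  classical
  rw [fc, map_sum]
  have h1 : ∀ q ∈ G, psi p (co q • y q) = if p = q then co q else 0 := by
    intro q _
    rw [map_smul, hbio p q]
    by_cases h : p = q <;> simp [h]
  rw [Finset.sum_congr rfl h1, Finset.sum_ite_eq]

theorem Pj_fc (hbio : ∀ p q, psi p (y q) = if p = q then 1 else 0)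
    (F G : Finset I) (co : I → ℝ) :
    Pj y psi F (fc y G co) = fc y (F ∩ G) co := by
  classical
  rw [Pj, fc_mask (F ∩ G) F Finset.inter_subset_left co]
  apply fc_congr
  intro p hp
  rw [psi_fc hbio p G co]
  by_cases h : p ∈ G <;> simp [h, hp]

theorem Pj_continuous (F : Finset I) : Continuous (fun w => Pj y psi F w) := by
  apply continuous_finset_sum
  intro p _
  exact ((psi p).continuous).smul continuous_const

theorem Pj_contract (hsp : IsSpreadingFam y) (hun : IsOneUnconditionalFam y)
    (hb : StrictMono base) (hbio : ∀ p q, psi p (y q) = if p = q then 1 else 0)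
    (hys : (Submodule.span ℝ (Set.range y)).topologicalClosure = ⊤)
    (F : Finset I) (w : Y) : ‖Pj y psi F w‖ ≤ ‖w‖ := by
  have hdense : Dense ((Submodule.span ℝ (Set.range y) : Submodule ℝ Y) : Set Y) :=
    Submodule.dense_iff_topologicalClosure_eq_top.mpr hys
  set s := {w : Y | ‖Pj y psi F w‖ ≤ ‖w‖} with hs
  have hclosed : IsClosed s :=
    isClosed_le (continuous_norm.comp (Pj_continuous F)) continuous_norm
  have hspan : ((Submodule.span ℝ (Set.range y) : Submodule ℝ Y) : Set Y) ⊆ s := by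
    intro v hv
    obtain ⟨G, co, rfl⟩ := span_rep hv
    show ‖Pj y psi F (fc y G co)‖ ≤ ‖fc y G co‖
    rw [Pj_fc hbio]
    exact fc_subset_le hsp hun hb Finset.inter_subset_right co
  have h1 := closure_minimal hspan hclosed
  rw [hdense.closure_eq] at h1
  exact h1 (Set.mem_univ w)

theorem psi_Pj (hbio : ∀ p q, psi p (y q) = if p = q then 1 else 0)
    (q : I) (F : Finset I) (w : Y) :
    psi q (Pj y psi F w) = if q ∈ F then psi q w else 0 := by
  rw [Pj, psi_fc hbio]

theorem Pj_sub (F : Finset I) (w w' : Y) :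
    Pj y psi F (w - w') = Pj y psi F w - Pj y psi F w' := by
  rw [Pj, Pj, Pj, fc, fc, fc, ← Finset.sum_sub_distrib]
  apply Finset.sum_congr rfl
  intro p _
  rw [map_sub, sub_smul]

/-- tail bound: if `w'` is a finite combination supported inside `F`,
then the tail of `w` beyond `F` is at most twice the approximation error. -/
theorem tail_le (hsp : IsSpreadingFam y) (hun : IsOneUnconditionalFam y)
    (hb : StrictMono base) (hbio : ∀ p q, psi p (y q) = if p = q then 1 else 0)
    (hys : (Submodule.span ℝ (Set.range y)).topologicalClosure = ⊤)
    {F G : Finset I} (hG : G ⊆ F) (co : I → ℝ) (w : Y) :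
    ‖w - Pj y psi F w‖ ≤ 2 * ‖w - fc y G co‖ := by
  set w' := fc y G co with hw'
  have hPw' : Pj y psi F w' = w' := by
    rw [hw', Pj_fc hbio, Finset.inter_eq_right.mpr hG]
  have key : w - Pj y psi F w = (w - w') - Pj y psi F (w - w') := by
    rw [Pj_sub, hPw']; abel
  rw [key]
  calc ‖(w - w') - Pj y psi F (w - w')‖
      ≤ ‖w - w'‖ + ‖Pj y psi F (w - w')‖ := norm_sub_le _ _
    _ ≤ ‖w - w'‖ + ‖w - w'‖ := by
        have := Pj_contract hsp hun hb hbio hys F (w - w')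
        linarith
    _ = 2 * ‖w - w'‖ := by ring

theorem Pj_union {F G : Finset I} (hd : Disjoint F G) (w : Y) :
    Pj y psi (F ∪ G) w = Pj y psi F w + Pj y psi G w := fc_union hd _

end proj


section comb

variable {I : Type*} [LinearOrder I]

set_option linter.unusedSectionVars false

/-- uncountable pigeonhole over a countable cover -/
theorem unc_union {A : Set I} (hA : ¬A.Countable) {J : Type*} [Countable J]
    (f : J → Set I) (hcov : A ⊆ ⋃ j, f j) : ∃ j, ¬(A ∩ f j).Countable := by
  by_contra h
  push_neg at h
  apply hA
  have hA' : A = ⋃ j, A ∩ f j := by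
    ext q
    constructor
    · intro hq
      obtain ⟨j, hj⟩ := Set.mem_iUnion.mp (hcov hq)
      exact Set.mem_iUnion.mpr ⟨j, hq, hj⟩
    · rintro hq
      obtain ⟨j, hj, -⟩ := Set.mem_iUnion.mp hq
      exact hj
  rw [hA']
  exact Set.countable_iUnion h

theorem unc_fiber {A : Set I} (hA : ¬A.Countable) {J : Type*} [Countable J] (g : I → J) :
    ∃ j, ¬(A ∩ g ⁻¹' {j}).Countable :=
  unc_union hA (fun j => g ⁻¹' {j}) (fun q _ => Set.mem_iUnion.mpr ⟨g q, rfl⟩)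

/-- interval pigeonhole: an uncountable set has an uncountable subset on which a
real-valued function oscillates by at most `2δ` -/
theorem unc_interval {A : Set I} (hA : ¬A.Countable) (g : I → ℝ) {δ : ℝ} (hδ : 0 < δ) :
    ∃ B ⊆ A, ¬B.Countable ∧ ∀ p ∈ B, ∀ q ∈ B, |g p - g q| ≤ 2 * δ := by
  obtain ⟨j, hj⟩ := unc_fiber hA (fun p => ⌊g p / δ⌋)
  refine ⟨A ∩ (fun p => ⌊g p / δ⌋) ⁻¹' {j}, Set.inter_subset_left, hj, ?_⟩
  rintro p ⟨-, hp⟩ q ⟨-, hq⟩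
  simp only [Set.mem_preimage, Set.mem_singleton_iff] at hp hq
  have h1 := Int.sub_one_lt_floor (g p / δ)
  have h2 := Int.floor_le (g p / δ)
  have h3 := Int.sub_one_lt_floor (g q / δ)
  have h4 := Int.floor_le (g q / δ)
  rw [hp] at h1 h2
  rw [hq] at h3 h4
  rw [abs_le]
  have e1 : g p - g q = ((g p / δ) - (g q / δ)) * δ := by
    field_simp
  constructor
  · rw [e1]; nlinarith
  · rw [e1]; nlinarith

/-- records refinement: in a set all of whose initial segments are countable,
an injective function can be made increasing on an uncountable subset -/
theorem unc_records {W A : Set I} (hwf : WellFounded ((· < ·) : I → I → Prop))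
    (hWinit : ∀ p ∈ W, {q ∈ W | q ≤ p}.Countable)
    (hAW : A ⊆ W) (hA : ¬A.Countable) (f : I → I) (hf : Set.InjOn f A) :
    ∃ B ⊆ A, ¬B.Countable ∧ ∀ p ∈ B, ∀ q ∈ B, p < q → f p < f q := by
  classical
  set B := {p ∈ A | ∀ q ∈ A, p ≤ q → f p ≤ f q} with hB
  have hBA : B ⊆ A := fun p hp => hp.1
  have hmono : ∀ p ∈ B, ∀ q ∈ B, p < q → f p < f q := by
    intro p hp q hq hpq
    have h1 : f p ≤ f q := hp.2 q hq.1 hpq.le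
    have h2 : f p ≠ f q := fun h => absurd (hf hp.1 hq.1 h) (ne_of_lt hpq)
    exact lt_of_le_of_ne h1 h2
  have hcof : ∀ p ∈ A, ∃ r ∈ B, p ≤ r := by
    intro p hp
    set S := f '' {q ∈ A | p ≤ q} with hS
    have hSne : S.Nonempty := ⟨f p, p, ⟨hp, le_refl p⟩, rfl⟩
    have hmS : hwf.min S hSne ∈ S := hwf.min_mem S hSne
    obtain ⟨r, ⟨hrA, hpr⟩, hrm⟩ := hmS
    refine ⟨r, ⟨hrA, ?_⟩, hpr⟩
    intro q hq hrq
    have hqS : f q ∈ S := ⟨q, ⟨hq, le_trans hpr hrq⟩, rfl⟩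
    have hnot := hwf.not_lt_min S hqS
    rw [← hrm] at hnot
    exact not_lt.mp hnot
  refine ⟨B, hBA, ?_, hmono⟩
  intro hBc
  apply hA
  have hcov : A ⊆ ⋃ r ∈ B, {q ∈ W | q ≤ r} := by
    intro p hp
    obtain ⟨r, hrB, hpr⟩ := hcof p hp
    exact Set.mem_biUnion hrB ⟨hAW hp, hpr⟩
  exact Set.Countable.mono hcov
    (hBc.biUnion (fun r hr => hWinit r (hAW (hBA hr))))

end comb


section delta

variable {I : Type*} [LinearOrder I]

/-- Δ-system lemma for uncountable families of finite sets of bounded size -/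
theorem delta_system : ∀ (m : ℕ) (A : Set I) (_ : ¬A.Countable) (D : I → Finset I)
    (_ : ∀ α ∈ A, (D α).card ≤ m),
    ∃ (B : Set I) (R : Finset I), B ⊆ A ∧ ¬B.Countable ∧
      (∀ α ∈ B, R ⊆ D α) ∧
      (∀ α ∈ B, ∀ β ∈ B, α ≠ β → D α ∩ D β = R) := by
  classical
  intro m
  induction m with
  | zero =>
    intro A hA D hD
    refine ⟨A, ∅, le_refl _, hA, fun α _ => Finset.empty_subset _, ?_⟩
    intro α hα β hβ _
    have h1 : D α = ∅ := Finset.card_eq_zero.mp (Nat.le_zero.mp (hD α hα))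
    rw [h1, Finset.empty_inter]
  | succ m ih =>
    intro A hA D hD
    by_cases hp : ∃ p : I, ¬(A ∩ {α | p ∈ D α}).Countable
    · obtain ⟨p, hp⟩ := hp
      set A' := A ∩ {α | p ∈ D α} with hA'
      have hDp : ∀ α ∈ A', ((D α).erase p).card ≤ m := by
        intro α hα
        rw [Finset.card_erase_of_mem hα.2]
        have := hD α hα.1
        omega
      obtain ⟨B, R', hBA', hB, hR'sub, hR'⟩ := ih A' hp (fun α => (D α).erase p) hDp
      refine ⟨B, insert p R', hBA'.trans Set.inter_subset_left, hB, ?_, ?_⟩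
      · intro α hα
        rw [Finset.insert_subset_iff]
        exact ⟨(hBA' hα).2, (hR'sub α hα).trans (Finset.erase_subset p (D α))⟩
      · intro α hα β hβ hne
        have e1 : D α = insert p ((D α).erase p) := (Finset.insert_erase (hBA' hα).2).symm
        have e2 : D β = insert p ((D β).erase p) := (Finset.insert_erase (hBA' hβ).2).symm
        rw [e1, e2]
        rw [Finset.insert_inter_of_mem (Finset.mem_insert_self p _),
          Finset.inter_insert_of_notMem (Finset.notMem_erase p _),
          hR' α hα β hβ hne]
    · push_neg at hp
      -- all fibers countable: extract an uncountable pairwise disjoint subfamily by Zorn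
      set 𝒮 : Set (Set I) := {S | S ⊆ A ∧ ∀ α ∈ S, ∀ β ∈ S, α ≠ β → D α ∩ D β = ∅} with h𝒮
      obtain ⟨S, hSmax⟩ := zorn_subset 𝒮 (by
        intro c hc hchain
        refine ⟨⋃₀ c, ⟨?_, ?_⟩, fun s hs => Set.subset_sUnion_of_mem hs⟩
        · exact Set.sUnion_subset (fun s hs => (hc hs).1)
        · intro α hα β hβ hne
          obtain ⟨s, hs, hαs⟩ := hα
          obtain ⟨t, ht, hβt⟩ := hβ
          rcases hchain.total hs ht with h | h
          · exact (hc ht).2 α (h hαs) β hβt hne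
          · exact (hc hs).2 α hαs β (h hβt) hne)
      have hSA : S ⊆ A := hSmax.1.1
      by_cases hSc : S.Countable
      · exfalso
        apply hA
        set U : Set I := ⋃ α ∈ S, (D α : Set I) with hU
        have hUc : U.Countable := hSc.biUnion (fun α _ => (D α).countable_toSet)
        have hcov : A ⊆ S ∪ ⋃ p ∈ U, (A ∩ {α | p ∈ D α}) := by
          intro β hβ
          by_cases hβS : β ∈ S
          · exact Set.mem_union_left _ hβS
          · right
            -- maximality: S ∪ {β} is not in 𝒮
            have hnot : ¬(insert β S ∈ 𝒮) := by
              intro hmem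
              exact hβS (hSmax.2 hmem (Set.subset_insert β S) (Set.mem_insert β S))
            have : ∃ α ∈ S, ¬(D β ∩ D α = ∅) := by
              by_contra hno
              push_neg at hno
              apply hnot
              constructor
              · exact Set.insert_subset hβ hSA
              · intro γ hγ γ' hγ' hne'
                rcases Set.mem_insert_iff.mp hγ with h1 | h1 <;>
                  rcases Set.mem_insert_iff.mp hγ' with h2 | h2
                · exact absurd (h1.trans h2.symm) hne'
                · subst h1; exact hno γ' h2
                · subst h2
                  rw [Finset.inter_comm]
                  exact hno γ h1
                · exact hSmax.1.2 γ h1 γ' h2 hne'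
            obtain ⟨α, hαS, hne0⟩ := this
            obtain ⟨p, hpmem⟩ := Finset.nonempty_iff_ne_empty.mpr hne0
            rw [Finset.mem_inter] at hpmem
            have hpU : p ∈ U := Set.mem_biUnion hαS (hpmem.2)
            exact Set.mem_biUnion hpU ⟨hβ, hpmem.1⟩
        apply Set.Countable.mono hcov
        exact hSc.union (hUc.biUnion (fun p _ => hp p))
      · refine ⟨S, ∅, hSA, hSc, fun α _ => Finset.empty_subset _, ?_⟩
        exact hSmax.1.2

end delta


section Wsec

theorem exists_W (κ : Cardinal) (hκ : Cardinal.aleph0 < κ) :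
    ∃ W : Set (↥(Set.Iio κ.ord)), ¬W.Countable ∧ ∀ p ∈ W, {q ∈ W | q ≤ p}.Countable := by
  have h1 : Cardinal.aleph 1 ≤ κ := by
    rw [← Cardinal.succ_aleph0]
    exact Order.succ_le_of_lt hκ
  have hord : (Cardinal.aleph 1).ord ≤ κ.ord := Cardinal.ord_le_ord.mpr h1
  have hlim : Order.IsSuccLimit ((Cardinal.aleph 1).ord) :=
    Cardinal.isSuccLimit_ord (le_of_lt Cardinal.aleph0_lt_aleph_one)
  refine ⟨{p | p.val < (Cardinal.aleph 1).ord}, ?_, ?_⟩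
  · intro hc
    have himg : (Subtype.val '' {p : ↥(Set.Iio κ.ord) | p.val < (Cardinal.aleph 1).ord}).Countable :=
      hc.image _
    have heq : Subtype.val '' {p : ↥(Set.Iio κ.ord) | p.val < (Cardinal.aleph 1).ord}
        = Set.Iio ((Cardinal.aleph 1).ord) := by
      ext o
      constructor
      · rintro ⟨p, hp, rfl⟩; exact hp
      · intro ho
        exact ⟨⟨o, lt_of_lt_of_le ho hord⟩, ho, rfl⟩
    rw [heq, Cardinal.countable_iff_lt_aleph_one, Ordinal.mk_Iio_ordinal,
      Cardinal.card_ord, Cardinal.lift_lt_aleph_one] at himg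
    exact absurd himg (lt_irrefl _)
  · intro p hp
    have hsub : {q ∈ {p : ↥(Set.Iio κ.ord) | p.val < (Cardinal.aleph 1).ord} | q ≤ p}
        ⊆ Subtype.val ⁻¹' (Set.Iio (p.val + 1)) := by
      rintro q ⟨-, hqp⟩
      simp only [Set.mem_preimage, Set.mem_Iio]
      rw [Ordinal.add_one_eq_succ, Order.lt_succ_iff]
      exact_mod_cast hqp
    apply Set.Countable.mono hsub
    apply Set.Countable.preimage _ Subtype.val_injective
    rw [Cardinal.countable_iff_lt_aleph_one, Ordinal.mk_Iio_ordinal, Cardinal.lift_lt_aleph_one]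
    apply Cardinal.lt_ord.mp
    rw [Ordinal.add_one_eq_succ]
    exact hlim.succ_lt hp

end Wsec


section heavy

variable {I : Type*} [LinearOrder I]

/-- dichotomy: either some single coordinate is heavy for uncountably many indices,
or we can injectively select heavy coordinates on an uncountable subset. -/
theorem heavy_dichotomy {A : Set I} (hA : ¬A.Countable) (Heavy : I → Set I)
    (hne : ∀ α ∈ A, (Heavy α).Nonempty) :
    (∃ p : I, ¬(A ∩ {α | p ∈ Heavy α}).Countable) ∨
    (∃ B ⊆ A, ¬B.Countable ∧ ∃ h : I → I, Set.InjOn h B ∧ ∀ α ∈ B, h α ∈ Heavy α) := by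
  classical
  by_cases hcase : ∃ p : I, ¬(A ∩ {α | p ∈ Heavy α}).Countable
  · exact Or.inl hcase
  right
  push_neg at hcase
  set 𝒢 : Set (Set (I × I)) := {g | (∀ z ∈ g, z.1 ∈ A ∧ z.2 ∈ Heavy z.1) ∧
    Set.InjOn Prod.fst g ∧ Set.InjOn Prod.snd g} with h𝒢
  obtain ⟨g, hgmax⟩ := zorn_subset 𝒢 (by
    intro c hc hchain
    refine ⟨⋃₀ c, ⟨?_, ?_, ?_⟩, fun s hs => Set.subset_sUnion_of_mem hs⟩
    · rintro z ⟨s, hs, hzs⟩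
      exact (hc hs).1 z hzs
    · rintro z ⟨s, hs, hzs⟩ z' ⟨t, ht, hzt⟩ hfst
      rcases hchain.total hs ht with h | h
      · exact (hc ht).2.1 (h hzs) hzt hfst
      · exact (hc hs).2.1 hzs (h hzt) hfst
    · rintro z ⟨s, hs, hzs⟩ z' ⟨t, ht, hzt⟩ hsnd
      rcases hchain.total hs ht with h | h
      · exact (hc ht).2.2 (h hzs) hzt hsnd
      · exact (hc hs).2.2 hzs (h hzt) hsnd)
  set S := Prod.fst '' g with hS
  have hSA : S ⊆ A := by
    rintro α ⟨z, hz, rfl⟩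
    exact (hgmax.1.1 z hz).1
  have hgc_of : S.Countable → g.Countable := fun hSc =>
    (Set.mapsTo_image Prod.fst g).countable_of_injOn hgmax.1.2.1 hSc
  by_cases hSc : S.Countable
  · exfalso
    apply hA
    set P := Prod.snd '' g with hP
    have hPc : P.Countable := (hgc_of hSc).image _
    have hcov : A ⊆ S ∪ ⋃ p ∈ P, (A ∩ {α | p ∈ Heavy α}) := by
      intro α hα
      by_cases hαS : α ∈ S
      · exact Set.mem_union_left _ hαS
      right
      -- every heavy coordinate of α lies in P, otherwise we could extend g
      have hHP : Heavy α ⊆ P := by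
        intro p hpH
        by_contra hpP
        have hins : insert (α, p) g ∈ 𝒢 := by
          refine ⟨?_, ?_, ?_⟩
          · rintro z hz
            rcases Set.mem_insert_iff.mp hz with rfl | hz'
            · exact ⟨hα, hpH⟩
            · exact hgmax.1.1 z hz'
          · rintro z hz z' hz' hfeq
            rcases Set.mem_insert_iff.mp hz with rfl | hz1 <;>
              rcases Set.mem_insert_iff.mp hz' with h2 | h2
            · rw [h2]
            · exact absurd ⟨z', h2, hfeq.symm⟩ hαS
            · subst h2; exact absurd ⟨z, hz1, hfeq⟩ hαS
            · exact hgmax.1.2.1 hz1 h2 hfeq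
          · rintro z hz z' hz' hseq
            rcases Set.mem_insert_iff.mp hz with rfl | hz1 <;>
              rcases Set.mem_insert_iff.mp hz' with h2 | h2
            · rw [h2]
            · exact absurd ⟨z', h2, hseq.symm⟩ hpP
            · subst h2; exact absurd ⟨z, hz1, hseq⟩ hpP
            · exact hgmax.1.2.2 hz1 h2 hseq
        have hginsert := hgmax.2 hins (Set.subset_insert _ g)
        have : (α, p) ∈ g := hginsert (Set.mem_insert _ g)
        exact hαS ⟨(α, p), this, rfl⟩
      obtain ⟨p, hpH⟩ := hne α hα
      exact Set.mem_biUnion (hHP hpH) ⟨hα, hpH⟩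
    apply Set.Countable.mono hcov
    exact hSc.union (hPc.biUnion (fun p _ => hcase p))
  · refine ⟨S, hSA, hSc, fun α => if h : ∃ p, (α, p) ∈ g then Classical.choose h else α, ?_, ?_⟩
    · intro α hα α' hα' heq
      obtain ⟨z, hz, hz1⟩ := hα
      obtain ⟨z', hz', hz1'⟩ := hα'
      have he : ∃ p, (α, p) ∈ g := ⟨z.2, by rwa [show (α, z.2) = z by rw [← hz1]]⟩
      have he' : ∃ p, (α', p) ∈ g := ⟨z'.2, by rwa [show (α', z'.2) = z' by rw [← hz1']]⟩
      simp only [dif_pos he, dif_pos he'] at heq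
      have h1 : (α, Classical.choose he) ∈ g := Classical.choose_spec he
      have h2 : (α', Classical.choose he') ∈ g := Classical.choose_spec he'
      have := hgmax.1.2.2 h1 h2 (by simpa using heq)
      simpa using congrArg Prod.fst this
    · intro α hα
      obtain ⟨z, hz, hz1⟩ := hα
      have he : ∃ p, (α, p) ∈ g := ⟨z.2, by rwa [show (α, z.2) = z by rw [← hz1]]⟩
      simp only [dif_pos he]
      exact (hgmax.1.1 _ (Classical.choose_spec he)).2

end heavy


section aux

variable {Y : Type*} [NormedAddCommGroup Y] [NormedSpace ℝ Y] [CompleteSpace Y]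
variable {I : Type*} [LinearOrder I]
variable {y : I → Y} {base : ℕ → I} {psi : I → Y →L[ℝ] ℝ}

set_option linter.unusedSectionVars false

theorem wn_abs {E' : Type*} [NormedAddCommGroup E'] [NormedSpace ℝ E'] {z : I → E'}
    (hun : IsOneUnconditionalFam z) (hb : StrictMono base)
    {n : ℕ} (a : Fin n → ℝ) : wn z base n (fun k => |a k|) = wn z base n a := by
  have h := wn_flip hun hb a (fun k => if a k < 0 then -1 else 1) (by
    intro k; by_cases h : a k < 0 <;> simp [h])
  rw [← h]
  congr 1
  funext k
  by_cases h : a k < 0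
  · simp [h, abs_of_neg h]
  · simp [h, abs_of_nonneg (not_lt.mp h)]

theorem lam_le {E' : Type*} [NormedAddCommGroup E'] [NormedSpace ℝ E'] {z : I → E'}
    (hsp : IsSpreadingFam z) (k : ℕ) :
    lam z base k ≤ k * ‖z (base 0)‖ := by
  have := wn_triangle_bound hsp (base := base) (fun _ : Fin k => (1:ℝ))
  simpa [lam] using this

theorem lam_nonneg {E' : Type*} [NormedAddCommGroup E'] [NormedSpace ℝ E'] {z : I → E'}
    (k : ℕ) : 0 ≤ lam z base k := norm_nonneg _

/-- `Pj` applied to finite linear combinations of vectors -/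
theorem Pj_sum (F : Finset I) {n : ℕ} (c : Fin n → ℝ) (w : Fin n → Y) :
    Pj y psi F (∑ k, c k • w k) = ∑ k, c k • Pj y psi F (w k) := by
  rw [Pj, fc]
  have h1 : ∀ p, psi p (∑ k, c k • w k) = ∑ k, c k * psi p (w k) := by
    intro p
    rw [map_sum]
    exact Finset.sum_congr rfl (fun k _ => by rw [map_smul]; rfl)
  calc ∑ p ∈ F, psi p (∑ k, c k • w k) • y p
      = ∑ p ∈ F, ∑ k, (c k * psi p (w k)) • y p := by
        apply Finset.sum_congr rfl
        intro p _
        rw [h1 p, Finset.sum_smul]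
    _ = ∑ k, ∑ p ∈ F, (c k * psi p (w k)) • y p := Finset.sum_comm
    _ = ∑ k, c k • Pj y psi F (w k) := by
        apply Finset.sum_congr rfl
        intro k _
        rw [Pj, fc, Finset.smul_sum]
        apply Finset.sum_congr rfl
        intro p _
        rw [smul_smul]

/-- existence of approximations from density of the span -/
theorem approx (hys : (Submodule.span ℝ (Set.range y)).topologicalClosure = ⊤)
    (w : Y) {ε : ℝ} (hε : 0 < ε) :
    ∃ (G : Finset I) (co : I → ℝ), ‖w - fc y G co‖ ≤ ε := by
  have hdense : Dense ((Submodule.span ℝ (Set.range y) : Submodule ℝ Y) : Set Y) :=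
    Submodule.dense_iff_topologicalClosure_eq_top.mpr hys
  obtain ⟨v, hv, hdist⟩ := Metric.mem_closure_iff.mp (hdense w) ε hε
  obtain ⟨G, co, rfl⟩ := span_rep hv
  exact ⟨G, co, le_of_lt (by rwa [dist_eq_norm] at hdist)⟩

/-- iterated interval-stabilization over a finite set of coordinates -/
theorem stab_finset {A : Set I} (hA : ¬A.Countable) (R : Finset I) (g : I → I → ℝ)
    {δ : ℝ} (hδ : 0 < δ) :
    ∃ B ⊆ A, ¬B.Countable ∧ ∀ r ∈ R, ∀ p ∈ B, ∀ q ∈ B, |g r p - g r q| ≤ 2 * δ := by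
  classical
  induction R using Finset.induction_on generalizing A with
  | empty => exact ⟨A, le_refl _, hA, by simp⟩
  | @insert r R hr ih =>
    obtain ⟨B1, hB1A, hB1, hB1p⟩ := ih hA
    obtain ⟨B2, hB2B1, hB2, hB2p⟩ := unc_interval hB1 (g r) hδ
    refine ⟨B2, hB2B1.trans hB1A, hB2, ?_⟩
    intro r' hr' p hp q hq
    rcases Finset.mem_insert.mp hr' with h | h
    · subst h; exact hB2p p hp q hq
    · exact hB1p r' h p (hB2B1 hp) q (hB2B1 hq)

/-- recursive construction of a chain of structures -/
theorem chain_construct {σ : Type*} (s0 : σ) (Q : ℕ → σ → σ → Prop)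
    (hstep : ∀ j s, ∃ s', Q j s s') :
    ∃ f : ℕ → σ, f 0 = s0 ∧ ∀ j, Q j (f j) (f (j+1)) := by
  choose g hg using hstep
  exact ⟨fun j => Nat.rec s0 (fun j s => g j s) j, rfl, fun j => hg j _⟩

theorem strictMono_snoc {t : ℕ} {α : Fin t → I} (h : StrictMono α) (x : I)
    (hx : ∀ i, α i < x) : StrictMono (Fin.snoc α x) := by
  intro i j hij
  rcases Fin.eq_castSucc_or_eq_last j with ⟨j', rfl⟩ | rfl
  · have hi : i < Fin.last t := lt_trans hij (Fin.castSucc_lt_last j')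
    rcases Fin.eq_castSucc_or_eq_last i with ⟨i', rfl⟩ | rfl
    · rw [Fin.snoc_castSucc, Fin.snoc_castSucc]
      exact h (by exact_mod_cast hij)
    · exact absurd hi (lt_irrefl _)
  · rcases Fin.eq_castSucc_or_eq_last i with ⟨i', rfl⟩ | rfl
    · rw [Fin.snoc_castSucc, Fin.snoc_last]
      exact hx i'
    · exact absurd hij (lt_irrefl _)

/-- an uncountable set contains arbitrarily long strictly increasing tuples -/
theorem unc_tuple {A : Set I} (hA : ¬A.Countable) (n : ℕ) :
    ∃ i : Fin n → I, StrictMono i ∧ ∀ k, i k ∈ A := by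
  classical
  have hinf : A.Infinite := fun hfin => hA hfin.countable
  obtain ⟨s, hsub, hcard⟩ := hinf.exists_subset_card_eq n
  refine ⟨fun k => ((s.orderIsoOfFin hcard k : s) : I), ?_, ?_⟩
  · intro k l hkl
    exact (s.orderIsoOfFin hcard).strictMono hkl
  · intro k
    exact hsub (Finset.coe_mem _)

theorem sum_eps_le (c : ℝ) (hc : 0 ≤ c) (n : ℕ) (g : ℕ → ℝ)
    (hg : ∀ j, g j = c / 2^(j+1)) : ∑ j ∈ Finset.range n, g j ≤ c := by
  have h1 : ∀ j ∈ Finset.range n, g j = c * (1/2)^(j+1) := by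
    intro j _
    rw [hg j]
    rw [div_eq_mul_inv, one_div]
    congr 1
    rw [inv_pow]
  rw [Finset.sum_congr rfl h1]
  rw [← Finset.mul_sum]
  calc c * ∑ j ∈ Finset.range n, (1/2:ℝ)^(j+1)
      ≤ c * 1 := by
        apply mul_le_mul_of_nonneg_left _ hc
        have h2 : ∀ j ∈ Finset.range n, (1/2:ℝ)^(j+1) = (1/2) * (1/2)^j := by
          intro j _; ring
        rw [Finset.sum_congr rfl h2, ← Finset.mul_sum]
        have := sum_geometric_two_le n
        linarith [this]
    _ = c := mul_one c

end aux


section levelzero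

set_option linter.unusedSectionVars false
set_option maxHeartbeats 1000000

theorem levelZero
    {X : Type*} [NormedAddCommGroup X] [NormedSpace ℝ X]
    {Y : Type*} [NormedAddCommGroup Y] [NormedSpace ℝ Y] [CompleteSpace Y]
    {I : Type*} [LinearOrder I] {x : I → X} {y : I → Y} {base : ℕ → I}
    {psi : I → Y →L[ℝ] ℝ}
    (hxsp : IsSpreadingFam x) (hxun : IsOneUnconditionalFam x)
    (hysp : IsSpreadingFam y) (hyun : IsOneUnconditionalFam y)
    (hb : StrictMono base)
    (hbio : ∀ p q, psi p (y q) = if p = q then 1 else 0)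
    (hys : (Submodule.span ℝ (Set.range y)).topologicalClosure = ⊤)
    (e : X ≃L[ℝ] Y)
    {W : Set I} (hW : ¬W.Countable) (hWinit : ∀ p ∈ W, {q ∈ W | q ≤ p}.Countable)
    (hwf : WellFounded ((· < ·) : I → I → Prop))
    (hdx : 0 < ‖x (base 0)‖) (hdy : 0 < ‖y (base 0)‖) :
    ∃ γ : ℝ, 0 < γ ∧
      ((∃ (p : I) (s : ℝ), (s = 1 ∨ s = -1) ∧ ∃ B ⊆ W, ¬B.Countable ∧
          ∀ α ∈ B, γ ≤ s * psi p (e (x α))) ∨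
        (∃ B ⊆ W, ¬B.Countable ∧ ∃ h : I → I, Set.InjOn h B ∧
          (∀ p ∈ B, ∀ q ∈ B, p < q → h p < h q) ∧
          ∀ α ∈ B, γ ≤ |psi (h α) (e (x α))|)) := by
  classical
  set dx := ‖x (base 0)‖ with hdxd
  set dy := ‖y (base 0)‖ with hdyd
  set Λ' := ‖(e.symm : Y →L[ℝ] X)‖ with hΛ'
  have hΛ'bd : ∀ w : Y, ‖e.symm w‖ ≤ Λ' * ‖w‖ := fun w => (e.symm : Y →L[ℝ] X).le_opNorm w
  set ε0 := dx / (16 * (Λ' + 1)) with hε0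
  have hΛ'0 : 0 ≤ Λ' := norm_nonneg _
  have hε0pos : 0 < ε0 := by rw [hε0]; positivity
  -- approximations
  have happrox : ∀ α : I, ∃ (G : Finset I) (co : I → ℝ), ‖e (x α) - fc y G co‖ ≤ ε0 :=
    fun α => approx hys (e (x α)) hε0pos
  choose G0 co0 hG0 using happrox
  -- same size
  obtain ⟨m0, hm0⟩ := unc_fiber hW (fun α => (G0 α).card)
  set A1 := W ∩ (fun α => (G0 α).card) ⁻¹' {m0} with hA1
  have hA1card : ∀ α ∈ A1, (G0 α).card = m0 := fun α hα => hα.2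
  -- Δ-system
  obtain ⟨B1, R0, hB1A1, hB1, hR0sub, hR0⟩ :=
    delta_system m0 A1 hm0 G0 (fun α hα => le_of_eq (hA1card α hα))
  -- root coordinate stabilization
  set δ0 := dx / (16 * (Λ' + 1) * (R0.card + 1) * (dy + 1)) with hδ0
  have hδ0pos : 0 < δ0 := by rw [hδ0]; positivity
  obtain ⟨B2, hB2B1, hB2, hB2stab⟩ :=
    stab_finset hB1 R0 (fun r α => psi r (e (x α))) hδ0pos
  -- the uniform heaviness threshold
  set γ := dx / (4 * (Λ' + 1) * (2 * m0 * dy + 1)) with hγ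
  have hγpos : 0 < γ := by rw [hγ]; positivity
  -- pair argument
  have hpair : ∀ α ∈ B2, ∀ β ∈ B2, α ≠ β →
      (∃ p, γ ≤ |psi p (e (x α))|) ∨ (∃ p, γ ≤ |psi p (e (x β))|) := by
    intro α hα β hβ hne
    set z := e (x α) - e (x β) with hzdef
    -- lower bound on ‖z‖
    have hxz : x α - x β = e.symm z := by rw [hzdef, map_sub, e.symm_apply_apply, e.symm_apply_apply]
    have hpairx : dx ≤ ‖x α - x β‖ := by
      have hfc : fc x {α, β} (fun p => if p = α then 1 else -1) = x α - x β := by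
        rw [fc, Finset.sum_pair hne]
        simp [Ne.symm hne]
        abel
      have := fc_coeff_le hxsp hxun hb (Finset.mem_insert_self α {β})
        (fun p => if p = α then 1 else -1)
      rw [hfc] at this
      simpa using this
    have hzlow : dx ≤ Λ' * ‖z‖ := le_trans hpairx (by rw [hxz]; exact hΛ'bd z)
    -- decomposition
    set Dα := G0 α \ R0 with hDα
    set Dβ := G0 β \ R0 with hDβ
    set S := Dα ∪ Dβ with hS
    set F := G0 α ∪ G0 β with hF
    have hαB1 : α ∈ B1 := hB2B1 hα
    have hβB1 : β ∈ B1 := hB2B1 hβ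
    have hRα : R0 ⊆ G0 α := hR0sub α hαB1
    have hRβ : R0 ⊆ G0 β := hR0sub β hβB1
    have hFRS : F = R0 ∪ S := by
      rw [hF, hS, hDα, hDβ]
      ext p
      simp only [Finset.mem_union, Finset.mem_sdiff]
      constructor
      · rintro (h | h)
        · by_cases hpR : p ∈ R0
          · exact Or.inl hpR
          · exact Or.inr (Or.inl ⟨h, hpR⟩)
        · by_cases hpR : p ∈ R0
          · exact Or.inl hpR
          · exact Or.inr (Or.inr ⟨h, hpR⟩)
      · rintro (h | (⟨h, -⟩ | ⟨h, -⟩))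
        · exact Or.inl (hRα h)
        · exact Or.inl h
        · exact Or.inr h
    have hdisjRS : Disjoint R0 S := by
      rw [hS, Finset.disjoint_union_right]
      exact ⟨Finset.disjoint_sdiff, Finset.disjoint_sdiff⟩
    -- tail bound
    have htail : ‖z - Pj y psi F z‖ ≤ 4 * ε0 := by
      have h1 : z - Pj y psi F z
          = (e (x α) - Pj y psi F (e (x α))) - (e (x β) - Pj y psi F (e (x β))) := by
        rw [hzdef, Pj_sub]; abel
      rw [h1]
      have h2 := tail_le hysp hyun hb hbio hys (show G0 α ⊆ F from Finset.subset_union_left) (co0 α) (e (x α))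
      have h3 := tail_le hysp hyun hb hbio hys (show G0 β ⊆ F from Finset.subset_union_right) (co0 β) (e (x β))
      calc ‖(e (x α) - Pj y psi F (e (x α))) - (e (x β) - Pj y psi F (e (x β)))‖
          ≤ ‖e (x α) - Pj y psi F (e (x α))‖ + ‖e (x β) - Pj y psi F (e (x β))‖ := norm_sub_le _ _
        _ ≤ 2 * ‖e (x α) - fc y (G0 α) (co0 α)‖ + 2 * ‖e (x β) - fc y (G0 β) (co0 β)‖ := by
            exact add_le_add h2 h3
        _ ≤ 4 * ε0 := by
            have := hG0 α
            have := hG0 β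
            linarith
    -- root part bound
    have hroot : ‖Pj y psi R0 z‖ ≤ 2 * δ0 * (R0.card * dy) := by
      have h1 : ∀ r ∈ R0, |psi r z| ≤ 2 * δ0 := by
        intro r hr
        rw [hzdef, map_sub]
        exact hB2stab r hr α hα β hβ
      have hPjeq : Pj y psi R0 z = fc y R0 (fun p => psi p z) := rfl
      calc ‖Pj y psi R0 z‖ = ‖fc y R0 (fun p => psi p z)‖ := by rw [hPjeq]
        _ ≤ (2 * δ0) * lam y base R0.card := fc_le_lam hysp hyun hb R0 _ (2*δ0) h1
        _ ≤ 2 * δ0 * (R0.card * dy) :=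
            mul_le_mul_of_nonneg_left (lam_le hysp R0.card) (by positivity)
    -- the S-part is large
    have hSbig : dx / (2 * (Λ' + 1)) ≤ ‖Pj y psi S z‖ := by
      have hpos1 : (0:ℝ) < Λ' + 1 := by positivity
      have hsplit : Pj y psi S z = z - (z - Pj y psi F z) - Pj y psi R0 z := by
        have hu : Pj y psi F z = Pj y psi R0 z + Pj y psi S z := by
          rw [hFRS]; exact Pj_union hdisjRS z
        rw [hu]; abel
      have hzlow2 : dx / (Λ' + 1) ≤ ‖z‖ := by
        rw [div_le_iff₀ hpos1]
        nlinarith [norm_nonneg z, hzlow]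
      have hε0eq : 4 * ε0 = dx / (4 * (Λ' + 1)) := by
        have hne : (Λ' + 1) ≠ 0 := by positivity
        rw [hε0]; field_simp; ring
      have hδ0bd : 2 * δ0 * (R0.card * dy) ≤ dx / (8 * (Λ' + 1)) := by
        have hR0c : (0:ℝ) ≤ (R0.card : ℝ) := Nat.cast_nonneg _
        have heq : 2 * δ0 * ((R0.card : ℝ) * dy)
            = (2 * dx * ((R0.card : ℝ) * dy)) / (16 * (Λ' + 1) * (R0.card + 1) * (dy + 1)) := by
          rw [hδ0]; ring
        rw [heq, div_le_div_iff₀ (by positivity) (by positivity)]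
        have key : (R0.card:ℝ)*dy ≤ ((R0.card:ℝ)+1)*(dy+1) := by nlinarith [hR0c, hdy]
        have key2 : 16*dx*(Λ'+1)*((R0.card:ℝ)*dy) ≤ 16*dx*(Λ'+1)*(((R0.card:ℝ)+1)*(dy+1)) :=
          mul_le_mul_of_nonneg_left key (by positivity)
        nlinarith [key2]
      have harith : dx / (2 * (Λ' + 1))
          ≤ dx / (Λ' + 1) - dx / (4 * (Λ' + 1)) - dx / (8 * (Λ' + 1)) := by
        have he1 : dx / (Λ' + 1) - dx / (4 * (Λ' + 1)) - dx / (8 * (Λ' + 1))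
            = (5 * dx) / (8 * (Λ' + 1)) := by
          field_simp
          ring
        rw [he1, div_le_div_iff₀ (by positivity) (by positivity)]
        nlinarith [hdx, hΛ'0]
      have t1 : ‖z‖ - ‖z - Pj y psi F z‖ ≤ ‖z - (z - Pj y psi F z)‖ := norm_sub_norm_le _ _
      have t2 : ‖z - (z - Pj y psi F z)‖ - ‖Pj y psi R0 z‖
          ≤ ‖(z - (z - Pj y psi F z)) - Pj y psi R0 z‖ := norm_sub_norm_le _ _
      have t3 : ‖(z - (z - Pj y psi F z)) - Pj y psi R0 z‖ = ‖Pj y psi S z‖ := by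
        rw [hsplit]
      linarith
    -- extract a heavy coordinate
    have hScard : (S.card : ℝ) ≤ 2 * m0 := by
      have h1 : S.card ≤ Dα.card + Dβ.card := Finset.card_union_le _ _
      have h2 : Dα.card ≤ m0 := by
        rw [hDα]
        exact le_trans (Finset.card_le_card (Finset.sdiff_subset)) (le_of_eq (hA1card α (hB1A1 hαB1)))
      have h3 : Dβ.card ≤ m0 := by
        rw [hDβ]
        exact le_trans (Finset.card_le_card (Finset.sdiff_subset)) (le_of_eq (hA1card β (hB1A1 hβB1)))
      push_cast
      have : S.card ≤ 2 * m0 := by omega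
      exact_mod_cast this
    have hheavy : ∃ p ∈ S, 2 * γ ≤ |psi p z| := by
      by_contra hno
      push_neg at hno
      have hPjeq : Pj y psi S z = fc y S (fun p => psi p z) := rfl
      have hbd : ‖Pj y psi S z‖ ≤ (2*γ) * lam y base S.card := by
        rw [hPjeq]
        exact fc_le_lam hysp hyun hb S _ (2*γ) (fun p hp => le_of_lt (hno p hp))
      have hlam : lam y base S.card ≤ 2 * m0 * dy := by
        calc lam y base S.card ≤ S.card * dy := lam_le hysp _
          _ ≤ 2 * m0 * dy := mul_le_mul_of_nonneg_right hScard (le_of_lt hdy)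
      have hnum : (2*γ) * (2 * m0 * dy) < dx / (2 * (Λ' + 1)) := by
        have hm0c : (0:ℝ) ≤ (m0 : ℝ) := Nat.cast_nonneg _
        have heq : (2*γ) * (2 * (m0:ℝ) * dy)
            = (2 * dx * (2 * (m0:ℝ) * dy)) / (4 * (Λ' + 1) * (2 * m0 * dy + 1)) := by
          rw [hγ]; ring
        rw [heq, div_lt_div_iff₀ (by positivity) (by positivity)]
        have hkey : 0 < dx*(Λ'+1) := by positivity
        nlinarith [hkey]
      have hcontra : ‖Pj y psi S z‖ < dx / (2 * (Λ' + 1)) := by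
        calc ‖Pj y psi S z‖ ≤ (2*γ) * lam y base S.card := hbd
          _ ≤ (2*γ) * (2 * m0 * dy) := mul_le_mul_of_nonneg_left hlam (by positivity)
          _ < dx / (2 * (Λ' + 1)) := hnum
      linarith [hSbig]
    obtain ⟨p, hpS, hpbig⟩ := hheavy
    have habs : |psi p z| ≤ |psi p (e (x α))| + |psi p (e (x β))| := by
      rw [hzdef, map_sub]
      exact (abs_sub _ _).trans (le_refl _)
    by_cases hc : γ ≤ |psi p (e (x α))|
    · exact Or.inl ⟨p, hc⟩
    · right
      refine ⟨p, ?_⟩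
      push_neg at hc
      linarith
  -- all but at most one element of B2 is heavy
  set B3 := {α ∈ B2 | ∃ p, γ ≤ |psi p (e (x α))|} with hB3
  have hB3unc : ¬B3.Countable := by
    intro hc
    apply hB2
    have hsub : B2 ⊆ B3 ∪ {α ∈ B2 | ¬∃ p, γ ≤ |psi p (e (x α))|} := by
      intro α hα
      by_cases h : ∃ p, γ ≤ |psi p (e (x α))|
      · exact Or.inl ⟨hα, h⟩
      · exact Or.inr ⟨hα, h⟩
    apply Set.Countable.mono hsub
    apply hc.union
    have hss : {α ∈ B2 | ¬∃ p, γ ≤ |psi p (e (x α))|}.Subsingleton := by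
      intro α hα β hβ
      by_contra hne
      rcases hpair α hα.1 β hβ.1 hne with h | h
      · exact hα.2 h
      · exact hβ.2 h
    exact hss.countable
  -- dichotomy
  rcases heavy_dichotomy hB3unc (fun α => {p | γ ≤ |psi p (e (x α))|})
    (fun α hα => hα.2) with ⟨p, hp⟩ | ⟨B4, hB4B3, hB4, h, hinj, hheavy⟩
  · -- single-coordinate case: stabilize the sign
    refine ⟨γ, hγpos, Or.inl ?_⟩
    obtain ⟨b, hb'⟩ := unc_fiber hp (fun α => decide (0 ≤ psi p (e (x α))))
    cases b
    · -- negative sign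
      refine ⟨p, -1, Or.inr rfl, _, ?_, hb', ?_⟩
      · intro α hα
        exact (hB1A1 (hB2B1 hα.1.1.1)).1
      · intro α hα
        have h1 : γ ≤ |psi p (e (x α))| := hα.1.2
        have h2 : ¬(0 ≤ psi p (e (x α))) := by
          have := hα.2
          simp only [Set.mem_preimage, Set.mem_singleton_iff, decide_eq_false_iff_not] at this
          exact this
        push_neg at h2
        rw [abs_of_neg h2] at h1
        linarith
    · refine ⟨p, 1, Or.inl rfl, _, ?_, hb', ?_⟩
      · intro α hα
        exact (hB1A1 (hB2B1 hα.1.1.1)).1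
      · intro α hα
        have h1 : γ ≤ |psi p (e (x α))| := hα.1.2
        have h2 : 0 ≤ psi p (e (x α)) := by
          have := hα.2
          simp only [Set.mem_preimage, Set.mem_singleton_iff, decide_eq_true_eq] at this
          exact this
        rw [abs_of_nonneg h2] at h1
        linarith
  · -- injective-selection case: records refinement
    have hB4W : B4 ⊆ W := fun α hα =>
      (hB1A1 (hB2B1 ((hB4B3 hα).1))).1
    obtain ⟨B5, hB5B4, hB5, hmono⟩ := unc_records hwf hWinit hB4W hB4 h hinj
    refine ⟨γ, hγpos, Or.inr ⟨B5, hB5B4.trans (hB4W), hB5, h, ?_, hmono, ?_⟩⟩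
    · exact Set.InjOn.mono hB5B4 hinj
    · intro α hα
      exact hheavy α (hB5B4 hα)

end levelzero


section tower

set_option linter.unusedSectionVars false
set_option maxHeartbeats 1000000

theorem tower_ex
    {Y : Type*} [NormedAddCommGroup Y] [NormedSpace ℝ Y] [CompleteSpace Y]
    {I : Type*} [LinearOrder I]
    {y : I → Y} {base : ℕ → I} {psi : I → Y →L[ℝ] ℝ}
    (hysp : IsSpreadingFam y) (hyun : IsOneUnconditionalFam y) (hb : StrictMono base)
    (hbio : ∀ p q, psi p (y q) = if p = q then 1 else 0)
    (hys : (Submodule.span ℝ (Set.range y)).topologicalClosure = ⊤)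
    {B5 : Set I} (hB5 : ¬B5.Countable)
    {h : I → I} (hinj : Set.InjOn h B5)
    (T : I → Y) (εs : ℕ → ℝ) (hεs : ∀ j, 0 < εs j) :
    ∃ (As : ℕ → Set I) (Rs : ℕ → Finset I) (Ds : ℕ → I → Finset I),
      As 0 = B5 ∧ (∀ j, As (j+1) ⊆ As j) ∧ (∀ j, ¬(As j).Countable) ∧ (∀ j, As j ⊆ B5) ∧
      (∀ j, ∀ α ∈ As (j+1),
        ‖T α - Pj y psi (Rs (j+1) ∪ Ds (j+1) α) (T α)‖ ≤ 2 * εs (j+1) ∧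
        h α ∈ Ds (j+1) α ∧ Disjoint (Ds (j+1) α) (Rs (j+1)) ∧
        ∀ β ∈ As (j+1), α ≠ β → Ds (j+1) α ∩ Ds (j+1) β = ∅) := by
  classical
  have step : ∀ (j : ℕ) (A : Set I), A ⊆ B5 → ¬A.Countable →
      ∃ (A' : Set I) (R : Finset I) (D : I → Finset I), A' ⊆ A ∧ ¬A'.Countable ∧
        ∀ α ∈ A', ‖T α - Pj y psi (R ∪ D α) (T α)‖ ≤ 2 * εs (j+1) ∧
          h α ∈ D α ∧ Disjoint (D α) R ∧
          ∀ β ∈ A', α ≠ β → D α ∩ D β = ∅ := by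
    intro j A hAB5 hA
    have happ : ∀ α : I, ∃ (G : Finset I) (co : I → ℝ), ‖T α - fc y G co‖ ≤ εs (j+1) :=
      fun α => approx hys (T α) (hεs (j+1))
    choose G1 co1 hG1 using happ
    set G' : I → Finset I := fun α => insert (h α) (G1 α) with hG'
    obtain ⟨m, hm⟩ := unc_fiber hA (fun α => (G' α).card)
    set A1 := A ∩ (fun α => (G' α).card) ⁻¹' {m} with hA1
    obtain ⟨B, R, hBA1, hBunc, hRsub, hRint⟩ :=
      delta_system m A1 hm G' (fun α hα => le_of_eq hα.2)
    set A' := B \ {α | h α ∈ R} with hA'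
    have hbadfin : (B ∩ {α | h α ∈ R}).Finite := by
      apply Set.Finite.of_finite_image (f := h)
      · apply Set.Finite.subset (R.finite_toSet)
        rintro p ⟨α, ⟨-, hα⟩, rfl⟩
        exact hα
      · exact hinj.mono (fun α hα => hAB5 (hBA1 hα.1).1)
    have hA'unc : ¬A'.Countable := by
      intro hc
      apply hBunc
      have hcov : B ⊆ A' ∪ (B ∩ {α | h α ∈ R}) := by
        intro α hα
        by_cases hh : h α ∈ R
        · exact Or.inr ⟨hα, hh⟩
        · exact Or.inl ⟨hα, hh⟩
      exact Set.Countable.mono hcov (hc.union hbadfin.countable)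
    have hA'B : A' ⊆ B := Set.diff_subset
    refine ⟨A', R, fun α => G' α \ R, fun α hα => (hBA1 (hA'B hα)).1, hA'unc, ?_⟩
    intro α hα
    have hαB : α ∈ B := hA'B hα
    have hFeq : R ∪ (G' α \ R) = G' α := Finset.union_sdiff_of_subset (hRsub α hαB)
    refine ⟨?_, ?_, Finset.sdiff_disjoint, ?_⟩
    · rw [hFeq]
      refine (tail_le hysp hyun hb hbio hys
        (show G1 α ⊆ G' α from Finset.subset_insert _ _) (co1 α) (T α)).trans ?_
      have := hG1 α
      linarith
    · rw [Finset.mem_sdiff]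
      exact ⟨Finset.mem_insert_self _ _, hα.2⟩
    · intro β hβ hne
      have hβB : β ∈ B := hA'B hβ
      ext p
      simp only [Finset.mem_inter, Finset.mem_sdiff, Finset.notMem_empty, iff_false]
      rintro ⟨⟨hp1, hp2⟩, ⟨hp3, -⟩⟩
      apply hp2
      rw [← hRint α hαB β hβB hne]
      exact Finset.mem_inter.mpr ⟨hp1, hp3⟩
  -- assemble the chain
  set Sigm := (Set I × Finset I × (I → Finset I))
  set Q : ℕ → Sigm → Sigm → Prop := fun j s s' =>
    (s.1 ⊆ B5 ∧ ¬s.1.Countable) →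
      (s'.1 ⊆ s.1 ∧ ¬s'.1.Countable ∧
       ∀ α ∈ s'.1, ‖T α - Pj y psi (s'.2.1 ∪ s'.2.2 α) (T α)‖ ≤ 2 * εs (j+1) ∧
         h α ∈ s'.2.2 α ∧ Disjoint (s'.2.2 α) s'.2.1 ∧
         ∀ β ∈ s'.1, α ≠ β → s'.2.2 α ∩ s'.2.2 β = ∅) with hQ
  have hstep : ∀ j s, ∃ s', Q j s s' := by
    intro j s
    by_cases hs : s.1 ⊆ B5 ∧ ¬s.1.Countable
    · obtain ⟨A', R, D, h1, h2, h3⟩ := step j s.1 hs.1 hs.2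
      exact ⟨(A', R, D), fun _ => ⟨h1, h2, h3⟩⟩
    · exact ⟨s, fun hcon => absurd hcon hs⟩
  obtain ⟨f, hf0, hfQ⟩ := chain_construct (B5, (∅ : Finset I), fun _ => (∅ : Finset I)) Q hstep
  have hInv : ∀ j, (f j).1 ⊆ B5 ∧ ¬(f j).1.Countable := by
    intro j
    induction j with
    | zero => rw [hf0]; exact ⟨le_refl _, hB5⟩
    | succ j ih =>
      obtain ⟨h1, h2, -⟩ := hfQ j ih
      exact ⟨h1.trans ih.1, h2⟩
  refine ⟨fun j => (f j).1, fun j => (f j).2.1, fun j => (f j).2.2, by show (f 0).1 = B5; rw [hf0], ?_, ?_, ?_, ?_⟩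
  · intro j; exact (hfQ j (hInv j)).1
  · intro j; exact (hInv j).2
  · intro j; exact (hInv j).1
  · intro j; exact (hfQ j (hInv j)).2.2

end tower


section config

set_option linter.unusedSectionVars false
set_option maxHeartbeats 1000000

theorem config_ex
    {I : Type*} [LinearOrder I]
    {W : Set I} (hWinit : ∀ p ∈ W, {q ∈ W | q ≤ p}.Countable)
    {B5 : Set I} (hB5W : B5 ⊆ W)
    {h : I → I} (hinj : Set.InjOn h B5)
    (As : ℕ → Set I) (Rs : ℕ → Finset I) (Ds : ℕ → I → Finset I)
    (hAs : ∀ j, ¬(As j).Countable) (hAsB5 : ∀ j, As j ⊆ B5)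
    (hdisj : ∀ j, ∀ α ∈ As (j+1), ∀ β ∈ As (j+1), α ≠ β → Ds (j+1) α ∩ Ds (j+1) β = ∅)
    (n : ℕ) :
    ∃ α : Fin n → I, StrictMono α ∧ (∀ k : Fin n, α k ∈ As ((k:ℕ)+1)) ∧
      (∀ k : Fin n, ∀ i : ℕ, h (α k) ∉ Rs (i+1)) ∧
      (∀ j k : Fin n, j ≠ k → h (α j) ∉ Ds ((k:ℕ)+1) (α k)) := by
  classical
  induction n with
  | zero =>
    refine ⟨Fin.elim0, ?_, ?_, ?_, ?_⟩
    · intro i; exact i.elim0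
    · intro k; exact k.elim0
    · intro k; exact k.elim0
    · intro j; exact j.elim0
  | succ t ih =>
    obtain ⟨α, hmono, hmem, hroot, hpair⟩ := ih
    set A := As (t+1) with hAdef
    have hAunc := hAs (t+1)
    have hαW : ∀ k : Fin t, α k ∈ W := fun k => hB5W (hAsB5 _ (hmem k))
    set bad1 : Set I := ⋃ k : Fin t, {q ∈ W | q ≤ α k} with hbad1d
    have hbad1 : bad1.Countable :=
      Set.countable_iUnion (fun k => hWinit (α k) (hαW k))
    set bad2 : Set I := A ∩ {q | ∃ i : ℕ, h q ∈ Rs (i+1)} with hbad2d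
    have hbad2 : bad2.Countable := by
      apply Set.MapsTo.countable_of_injOn
        (t := ⋃ i : ℕ, ((Rs (i+1) : Finset I) : Set I)) (f := h)
      · rintro q ⟨_, i, hqi⟩
        exact Set.mem_iUnion.mpr ⟨i, hqi⟩
      · exact hinj.mono (fun q hq => hAsB5 _ hq.1)
      · exact Set.countable_iUnion (fun i => (Rs (i+1)).countable_toSet)
    set bad3 : Set I := ⋃ k : Fin t, {q ∈ A | h (α k) ∈ Ds (t+1) q} with hbad3d
    have hbad3 : bad3.Countable := by
      apply Set.countable_iUnion
      intro k
      apply Set.Subsingleton.countable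
      rintro q ⟨hqA, hq⟩ q' ⟨hq'A, hq'⟩
      by_contra hne
      have hd := hdisj t q hqA q' hq'A hne
      have hmemint : h (α k) ∈ Ds (t+1) q ∩ Ds (t+1) q' := Finset.mem_inter.mpr ⟨hq, hq'⟩
      rw [hd] at hmemint
      exact absurd hmemint (Finset.notMem_empty _)
    set bad4 : Set I := A ∩ {q | ∃ k : Fin t, h q ∈ Ds ((k:ℕ)+1) (α k)} with hbad4d
    have hbad4 : bad4.Countable := by
      apply Set.MapsTo.countable_of_injOn
        (t := ⋃ k : Fin t, ((Ds ((k:ℕ)+1) (α k) : Finset I) : Set I)) (f := h)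
      · rintro q ⟨_, k, hqk⟩
        exact Set.mem_iUnion.mpr ⟨k, hqk⟩
      · exact hinj.mono (fun q hq => hAsB5 _ hq.1)
      · exact Set.countable_iUnion (fun k => (Ds ((k:ℕ)+1) (α k)).countable_toSet)
    have hrem : ¬(A \ (bad1 ∪ bad2 ∪ bad3 ∪ bad4)).Countable := by
      intro hc
      apply hAunc
      have hcov : A ⊆ (A \ (bad1 ∪ bad2 ∪ bad3 ∪ bad4)) ∪ (bad1 ∪ bad2 ∪ bad3 ∪ bad4) := by
        intro q hq
        by_cases hqb : q ∈ bad1 ∪ bad2 ∪ bad3 ∪ bad4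
        · exact Or.inr hqb
        · exact Or.inl ⟨hq, hqb⟩
      exact Set.Countable.mono hcov
        (hc.union (((hbad1.union hbad2).union hbad3).union hbad4))
    have hne : (A \ (bad1 ∪ bad2 ∪ bad3 ∪ bad4)).Nonempty := by
      rw [Set.nonempty_iff_ne_empty]
      intro he
      exact hrem (he ▸ Set.countable_empty)
    obtain ⟨xnew, hxA, hxbad⟩ := hne
    have hxW : xnew ∈ W := hB5W (hAsB5 _ hxA)
    have hxb1 : xnew ∉ bad1 := fun hc => hxbad (Or.inl (Or.inl (Or.inl hc)))
    have hxb2 : xnew ∉ bad2 := fun hc => hxbad (Or.inl (Or.inl (Or.inr hc)))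
    have hxb3 : xnew ∉ bad3 := fun hc => hxbad (Or.inl (Or.inr hc))
    have hxb4 : xnew ∉ bad4 := fun hc => hxbad (Or.inr hc)
    have hgt : ∀ k : Fin t, α k < xnew := by
      intro k
      by_contra hle
      push_neg at hle
      exact hxb1 (Set.mem_iUnion.mpr ⟨k, hxW, hle⟩)
    refine ⟨Fin.snoc α xnew, strictMono_snoc hmono xnew hgt, ?_, ?_, ?_⟩
    · intro k
      rcases Fin.eq_castSucc_or_eq_last k with ⟨k', rfl⟩ | rfl
      · rw [Fin.snoc_castSucc]
        have : ((Fin.castSucc k' : Fin (t+1)) : ℕ) = (k' : ℕ) := Fin.coe_castSucc k'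
        rw [this]
        exact hmem k'
      · rw [Fin.snoc_last]
        have : ((Fin.last t : Fin (t+1)) : ℕ) = t := Fin.val_last t
        rw [this]
        exact hxA
    · intro k i
      rcases Fin.eq_castSucc_or_eq_last k with ⟨k', rfl⟩ | rfl
      · rw [Fin.snoc_castSucc]
        exact hroot k' i
      · rw [Fin.snoc_last]
        intro hcon
        exact hxb2 ⟨hxA, i, hcon⟩
    · intro j k hjk
      rcases Fin.eq_castSucc_or_eq_last j with ⟨j', rfl⟩ | rfl <;>
        rcases Fin.eq_castSucc_or_eq_last k with ⟨k', rfl⟩ | rfl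
      · rw [Fin.snoc_castSucc, Fin.snoc_castSucc, Fin.coe_castSucc]
        exact hpair j' k' (fun hc => hjk (by rw [hc]))
      · rw [Fin.snoc_castSucc, Fin.snoc_last, Fin.val_last]
        intro hcon
        exact hxb3 (Set.mem_iUnion.mpr ⟨j', hxA, hcon⟩)
      · rw [Fin.snoc_last, Fin.snoc_castSucc, Fin.coe_castSucc]
        intro hcon
        exact hxb4 ⟨hxA, k', hcon⟩
      · exact absurd rfl hjk
    
end config


section keydir

set_option linter.unusedSectionVars false
set_option maxHeartbeats 2000000

variable {Y : Type*} [NormedAddCommGroup Y] [NormedSpace ℝ Y] [CompleteSpace Y]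
variable {I : Type*} [LinearOrder I]

theorem Pj_add {y : I → Y} {psi : I → Y →L[ℝ] ℝ} (F : Finset I) (w w' : Y) :
    Pj y psi F (w + w') = Pj y psi F w + Pj y psi F w' := by
  rw [Pj, Pj, Pj, fc, fc, fc, ← Finset.sum_add_distrib]
  apply Finset.sum_congr rfl
  intro p _
  rw [map_add, add_smul]

theorem key_dir
    {X : Type*} [NormedAddCommGroup X] [NormedSpace ℝ X]
    {x : I → X} {y : I → Y} {base : ℕ → I}
    (hxsp : IsSpreadingFam x) (hxun : IsOneUnconditionalFam x)
    (hysp : IsSpreadingFam y) (hyun : IsOneUnconditionalFam y)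
    (hb : StrictMono base)
    (hxs : (Submodule.span ℝ (Set.range x)).topologicalClosure = ⊤)
    (hys : (Submodule.span ℝ (Set.range y)).topologicalClosure = ⊤)
    (e : X ≃L[ℝ] Y)
    {W : Set I} (hW : ¬W.Countable) (hWinit : ∀ p ∈ W, {q ∈ W | q ≤ p}.Countable)
    (hwf : WellFounded ((· < ·) : I → I → Prop)) :
    ∃ C : ℝ, 0 < C ∧ ∀ (n : ℕ) (a : Fin n → ℝ), wn y base n a ≤ C * wn x base n a := by
  classical
  by_cases hdy : ‖y (base 0)‖ = 0
  · -- the y family is identically zero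
    refine ⟨1, one_pos, fun n a => ?_⟩
    have hy0 : ∀ p, y p = 0 := fun p => norm_eq_zero.mp (by rw [norm_z_const hysp p, hdy])
    have hz : wn y base n a = 0 := by
      rw [wn]
      have hzz : ∀ k ∈ Finset.univ, a k • y (base (k:ℕ)) = (0 : Y) :=
        fun k _ => by rw [hy0, smul_zero]
      rw [Finset.sum_congr rfl hzz, Finset.sum_const_zero, norm_zero]
    rw [hz, one_mul]
    exact wn_nonneg n a
  by_cases hdx : ‖x (base 0)‖ = 0
  · -- impossible: X would be trivial, hence Y trivial
    exfalso
    have hx0 : ∀ p, x p = 0 := fun p => norm_eq_zero.mp (by rw [norm_z_const hxsp p, hdx])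
    have hspan : Submodule.span ℝ (Set.range x) = ⊥ := by
      rw [Submodule.span_eq_bot]
      rintro z ⟨p, rfl⟩
      exact hx0 p
    have hX0 : ∀ z : X, z = 0 := by
      intro z
      have hz : z ∈ (Submodule.span ℝ (Set.range x)).topologicalClosure := by
        rw [hxs]; trivial
      rw [hspan] at hz
      have hz2 : z ∈ closure (((⊥ : Submodule ℝ X) : Submodule ℝ X) : Set X) := hz
      rw [Submodule.bot_coe, closure_singleton] at hz2
      exact hz2
    apply hdy
    have : y (base 0) = e (e.symm (y (base 0))) := (e.apply_symm_apply _).symm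
    rw [this, hX0 (e.symm (y (base 0))), map_zero, norm_zero]
  have hdy' : 0 < ‖y (base 0)‖ := lt_of_le_of_ne (norm_nonneg _) (Ne.symm hdy)
  have hdx' : 0 < ‖x (base 0)‖ := lt_of_le_of_ne (norm_nonneg _) (Ne.symm hdx)
  set dx := ‖x (base 0)‖ with hdxd
  set dy := ‖y (base 0)‖ with hdyd
  set Λ := ‖(e : X →L[ℝ] Y)‖ with hΛd
  have heΛ : ∀ z : X, ‖e z‖ ≤ Λ * ‖z‖ := fun z => (e : X →L[ℝ] Y).le_opNorm z
  obtain ⟨psi, hbio, hpsib⟩ := exists_psi hysp hyun hb hdy' hys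
  obtain ⟨γ, hγ, hcases⟩ := levelZero hxsp hxun hysp hyun hb hbio hys e hW hWinit hwf hdx' hdy'
  rcases hcases with ⟨p, s, hsgn, B, hBW, hBunc, hBheavy⟩ | ⟨B5, hB5W, hB5unc, h, hinj, hmono, hheavy⟩
  · -- ℓ¹-type case
    refine ⟨Λ/γ + 1, by positivity, fun n a => ?_⟩
    obtain ⟨i, himono, hiB⟩ := unc_tuple hBunc n
    -- lower bound for the x-word
    set Zx := ∑ k, |a k| • x (i k) with hZx
    have hZxn : ‖Zx‖ = wn x base n a := by
      rw [hZx, wn_spread hxsp hb _ himono, wn_abs hxun hb]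
    have hexp : psi p (e Zx) = ∑ k, |a k| * psi p (e (x (i k))) := by
      rw [hZx, map_sum, map_sum]
      apply Finset.sum_congr rfl
      intro k _
      rw [map_smul, map_smul]
      rfl
    have hsum : γ * ∑ k, |a k| ≤ s * psi p (e Zx) := by
      rw [hexp, Finset.mul_sum, Finset.mul_sum]
      apply Finset.sum_le_sum
      intro k _
      have h1 : γ ≤ s * psi p (e (x (i k))) := hBheavy (i k) (hiB k)
      calc γ * |a k| = |a k| * γ := mul_comm _ _
        _ ≤ |a k| * (s * psi p (e (x (i k)))) :=
            mul_le_mul_of_nonneg_left h1 (abs_nonneg _)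
        _ = s * (|a k| * psi p (e (x (i k)))) := by ring
    have habs : s * psi p (e Zx) ≤ |psi p (e Zx)| := by
      rcases hsgn with rfl | rfl
      · rw [one_mul]; exact le_abs_self _
      · rw [neg_one_mul]; exact neg_le_abs _
    have hfin : γ * ∑ k, |a k| ≤ (Λ/dy) * wn x base n a := by
      calc γ * ∑ k, |a k| ≤ |psi p (e Zx)| := le_trans hsum habs
        _ ≤ (1/dy) * ‖e Zx‖ := hpsib p (e Zx)
        _ ≤ (1/dy) * (Λ * ‖Zx‖) := by
            apply mul_le_mul_of_nonneg_left (heΛ Zx) (by positivity)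
        _ = (Λ/dy) * wn x base n a := by rw [hZxn]; ring
    have hsa : ∑ k, |a k| ≤ Λ * wn x base n a / (dy * γ) := by
      have hne1 : dy ≠ 0 := ne_of_gt hdy'
      rw [le_div_iff₀ (by positivity)]
      calc (∑ k, |a k|) * (dy * γ) = (γ * ∑ k, |a k|) * dy := by ring
        _ ≤ ((Λ/dy) * wn x base n a) * dy :=
            mul_le_mul_of_nonneg_right hfin (le_of_lt hdy')
        _ = Λ * wn x base n a := by field_simp
    calc wn y base n a ≤ (∑ k, |a k|) * dy := wn_triangle_bound hysp a
      _ ≤ (Λ * wn x base n a / (dy * γ)) * dy :=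
          mul_le_mul_of_nonneg_right hsa (le_of_lt hdy')
      _ = (Λ/γ) * wn x base n a := by
          have hne1 : dy ≠ 0 := ne_of_gt hdy'
          have hne2 : γ ≠ 0 := ne_of_gt hγ
          field_simp
      _ ≤ (Λ/γ + 1) * wn x base n a := by nlinarith [wn_nonneg (z := x) (base := base) n a]
  · -- main case
    set εs : ℕ → ℝ := fun j => (γ * dy / 4) / 2^(j+1) with hεsd
    have hεsp : ∀ j, 0 < εs j := fun j => by rw [hεsd]; positivity
    obtain ⟨As, Rs, Ds, hAs0, hAsnest, hAsunc, hAsB5, htower⟩ :=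
      tower_ex hysp hyun hb hbio hys hB5unc hinj (fun α => e (x α)) εs hεsp
    obtain ⟨C0, hC0⟩ : ∃ C0 : ℝ, C0 = Λ/γ + dy/(2*dx) + 1 := ⟨_, rfl⟩
    refine ⟨C0, by rw [hC0]; positivity, fun n a => ?_⟩
    obtain ⟨α, hαmono, hαmem, hαroot, hαpair⟩ :=
      config_ex hWinit hB5W hinj As Rs Ds hAsunc hAsB5
        (fun j α hα β hβ hne => (htower j α hα).2.2.2 β hβ hne) n
    set v : Fin n → Y := fun k => e (x (α k)) with hvd
    set F : Fin n → Finset I := fun k => Rs ((k:ℕ)+1) ∪ Ds ((k:ℕ)+1) (α k) with hFd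
    set w : Fin n → Y := fun k => v k - Pj y psi (F k) (v k) with hwd
    have htail : ∀ k : Fin n, ‖w k‖ ≤ 2 * εs ((k:ℕ)+1) :=
      fun k => (htower (k:ℕ) (α k) (hαmem k)).1
    have hhD : ∀ k : Fin n, h (α k) ∈ Ds ((k:ℕ)+1) (α k) :=
      fun k => (htower (k:ℕ) (α k) (hαmem k)).2.1
    have hαB5 : ∀ k : Fin n, α k ∈ B5 := fun k => hAsB5 _ (hαmem k)
    have hhmono : StrictMono (fun k : Fin n => h (α k)) := by
      intro k l hkl
      exact hmono (α k) (hαB5 k) (α l) (hαB5 l) (hαmono hkl)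
    set c : Fin n → ℝ := fun k => psi (h (α k)) (v k) with hcd
    have hc : ∀ k, γ ≤ |c k| := fun k => hheavy (α k) (hαB5 k)
    set H : Finset I := Finset.image (fun k : Fin n => h (α k)) Finset.univ with hHd
    set Z : Y := ∑ k, a k • v k with hZd
    set ustar : Y := ∑ k, (a k * c k) • y (h (α k)) with hud
    -- the key projection identity
    have hHF : ∀ k : Fin n, H ∩ F k = {h (α k)} := by
      intro k
      ext q
      simp only [Finset.mem_inter, Finset.mem_singleton]
      constructor
      · rintro ⟨hqH, hqF⟩
        rw [hHd, Finset.mem_image] at hqH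
        obtain ⟨j, -, rfl⟩ := hqH
        by_cases hjk : j = k
        · rw [hjk]
        · exfalso
          rcases Finset.mem_union.mp hqF with hr | hd
          · exact hαroot j ((k:ℕ)) hr
          · exact hαpair j k hjk hd
      · rintro rfl
        constructor
        · rw [hHd, Finset.mem_image]
          exact ⟨k, Finset.mem_univ k, rfl⟩
        · exact Finset.mem_union_right _ (hhD k)
    have hkey : ∀ k : Fin n, Pj y psi H (v k) = c k • y (h (α k)) + Pj y psi H (w k) := by
      intro k
      have hsplit : v k = Pj y psi (F k) (v k) + w k := by
        show v k = Pj y psi (F k) (v k) + (v k - Pj y psi (F k) (v k))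
        abel
      have h1 : Pj y psi H (v k)
          = Pj y psi H (Pj y psi (F k) (v k)) + Pj y psi H (w k) := by
        conv_lhs => rw [hsplit]
        exact Pj_add H _ _
      have h2 : Pj y psi H (Pj y psi (F k) (v k)) = c k • y (h (α k)) := by
        have h3 : Pj y psi (F k) (v k) = fc y (F k) (fun p => psi p (v k)) := rfl
        rw [h3, Pj_fc hbio, hHF k, fc, Finset.sum_singleton]
      rw [h1, h2]
    have hPjZ : Pj y psi H Z = ustar + Pj y psi H (∑ k, a k • w k) := by
      rw [hZd, Pj_sum]
      calc ∑ k, a k • Pj y psi H (v k)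
          = ∑ k, (a k • (c k • y (h (α k))) + a k • Pj y psi H (w k)) := by
            apply Finset.sum_congr rfl
            intro k _
            rw [hkey k, smul_add]
        _ = ∑ k, a k • (c k • y (h (α k))) + ∑ k, a k • Pj y psi H (w k) :=
            Finset.sum_add_distrib
        _ = ustar + Pj y psi H (∑ k, a k • w k) := by
            rw [Pj_sum, hud]
            congr 1
            apply Finset.sum_congr rfl
            intro k _
            rw [smul_smul]
    -- estimates
    have hustar_eq : ‖ustar‖ = wn y base n (fun k => a k * c k) := by
      rw [hud, wn_spread hysp hb _ hhmono]
    have hlow : wn y base n a ≤ (1/γ) * ‖ustar‖ := by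
      rw [hustar_eq]
      have h1 : wn y base n a ≤ wn y base n (fun k => (1/γ) * (a k * c k)) := by
        apply wn_mono hyun hb
        intro k
        have h2 : |(1/γ) * (a k * c k)| = (1/γ) * (|a k| * |c k|) := by
          rw [abs_mul, abs_mul, abs_of_pos (by positivity : (0:ℝ) < 1/γ)]
        rw [h2]
        have h3 := hc k
        have h4 : |a k| * γ ≤ |a k| * |c k| :=
          mul_le_mul_of_nonneg_left h3 (abs_nonneg _)
        rw [div_mul_eq_mul_div, one_mul, le_div_iff₀ hγ]
        linarith
      rw [wn_smul] at h1
      rw [abs_of_pos (by positivity : (0:ℝ) < 1/γ)] at h1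
      exact h1
    have hZbound : ‖Pj y psi H Z‖ ≤ Λ * wn x base n a := by
      have h1 : Z = e (∑ k, a k • x (α k)) := by
        rw [hZd, map_sum]
        apply Finset.sum_congr rfl
        intro k _
        rw [map_smul]
      calc ‖Pj y psi H Z‖ ≤ ‖Z‖ := Pj_contract hysp hyun hb hbio hys H Z
        _ = ‖e (∑ k, a k • x (α k))‖ := by rw [h1]
        _ ≤ Λ * ‖∑ k, a k • x (α k)‖ := heΛ _
        _ = Λ * wn x base n a := by rw [wn_spread hxsp hb _ hαmono]
    have hwbound : ‖Pj y psi H (∑ k, a k • w k)‖ ≤ (wn x base n a / dx) * (γ * dy / 2) := by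
      have hcoef : ∀ k, |a k| ≤ wn x base n a / dx := by
        intro k
        rw [le_div_iff₀ hdx']
        exact wn_coeff_le hxsp hxun hb a k
      have hsum : ∑ k : Fin n, εs ((k:ℕ)+1) ≤ γ * dy / 4 := by
        have h1 : ∀ k : Fin n, εs ((k:ℕ)+1) ≤ (γ * dy / 4) / 2^((k:ℕ)+1) := by
          intro k
          rw [hεsd]
          apply div_le_div_of_nonneg_left (by positivity) (by positivity)
          have : (2:ℝ)^((k:ℕ)+1) ≤ 2^((k:ℕ)+1+1) := by
            apply pow_le_pow_right₀ (by norm_num)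
            omega
          exact this
        calc ∑ k : Fin n, εs ((k:ℕ)+1) ≤ ∑ k : Fin n, (γ * dy / 4) / 2^((k:ℕ)+1) :=
              Finset.sum_le_sum (fun k _ => h1 k)
          _ = ∑ j ∈ Finset.range n, (γ * dy / 4) / 2^(j+1) :=
              Fin.sum_univ_eq_sum_range (fun j => γ * dy / 4 / 2 ^ (j+1)) n
          _ ≤ γ * dy / 4 := sum_eps_le _ (by positivity) n _ (fun j => rfl)
      calc ‖Pj y psi H (∑ k, a k • w k)‖
          ≤ ‖∑ k, a k • w k‖ := Pj_contract hysp hyun hb hbio hys H _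
        _ ≤ ∑ k, ‖a k • w k‖ := norm_sum_le _ _
        _ ≤ ∑ k : Fin n, (wn x base n a / dx) * (2 * εs ((k:ℕ)+1)) := by
            apply Finset.sum_le_sum
            intro k _
            rw [norm_smul, Real.norm_eq_abs]
            exact mul_le_mul (hcoef k) (htail k) (norm_nonneg _)
              (div_nonneg (wn_nonneg _ _) (le_of_lt hdx'))
        _ = (wn x base n a / dx) * (2 * ∑ k : Fin n, εs ((k:ℕ)+1)) := by
            conv_rhs => rw [Finset.mul_sum, Finset.mul_sum]
        _ ≤ (wn x base n a / dx) * (2 * (γ * dy / 4)) := by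
            apply mul_le_mul_of_nonneg_left _ (div_nonneg (wn_nonneg _ _) (le_of_lt hdx'))
            linarith [hsum]
        _ = (wn x base n a / dx) * (γ * dy / 2) := by ring
    have hu_up : ‖ustar‖ ≤ Λ * wn x base n a + (wn x base n a / dx) * (γ * dy / 2) := by
      have h1 : ustar = Pj y psi H Z - Pj y psi H (∑ k, a k • w k) := by
        rw [hPjZ]; abel
      rw [h1]
      calc ‖Pj y psi H Z - Pj y psi H (∑ k, a k • w k)‖
          ≤ ‖Pj y psi H Z‖ + ‖Pj y psi H (∑ k, a k • w k)‖ := norm_sub_le _ _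
        _ ≤ Λ * wn x base n a + (wn x base n a / dx) * (γ * dy / 2) :=
            add_le_add hZbound hwbound
    calc wn y base n a ≤ (1/γ) * ‖ustar‖ := hlow
      _ ≤ (1/γ) * (Λ * wn x base n a + (wn x base n a / dx) * (γ * dy / 2)) :=
          mul_le_mul_of_nonneg_left hu_up (by positivity)
      _ = (Λ/γ + dy/(2*dx)) * wn x base n a := by
          have hne1 : γ ≠ 0 := ne_of_gt hγ
          have hne2 : dx ≠ 0 := ne_of_gt hdx'
          field_simp
      _ ≤ C0 * wn x base n a := by
          rw [hC0]
          nlinarith [wn_nonneg (z := x) (base := base) n a]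

end keydir


end SubsymProof

open SubsymProof in
theorem subsymmetric_families_equiv_of_isomorphic'
    (κ : Cardinal) (hκ : Cardinal.aleph0 < κ)
    (X : Type) [NormedAddCommGroup X] [NormedSpace ℝ X] [CompleteSpace X]
    (Y : Type) [NormedAddCommGroup Y] [NormedSpace ℝ Y] [CompleteSpace Y]
    (x : ↥(Set.Iio κ.ord) → X) (y : ↥(Set.Iio κ.ord) → Y)
    (hx : IsSpreadingFam x ∧ IsOneUnconditionalFam x)
    (hy : IsSpreadingFam y ∧ IsOneUnconditionalFam y)
    (hxs : (Submodule.span ℝ (Set.range x)).topologicalClosure = ⊤)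
    (hys : (Submodule.span ℝ (Set.range y)).topologicalClosure = ⊤)
    (h : Nonempty (X ≃L[ℝ] Y)) :
    ∃ C : ℝ, ∀ (n : ℕ) (a : Fin n → ℝ) (i : Fin n → ↥(Set.Iio κ.ord)), StrictMono i →
      C⁻¹ * ‖∑ k, a k • x (i k)‖ ≤ ‖∑ k, a k • y (i k)‖ ∧
      ‖∑ k, a k • y (i k)‖ ≤ C * ‖∑ k, a k • x (i k)‖ := by
  classical
  obtain ⟨e⟩ := h
  have hω : (Cardinal.aleph0).ord ≤ κ.ord := Cardinal.ord_le_ord.mpr (le_of_lt hκ)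
  have hbase : ∀ k : ℕ, ((k : Ordinal) ∈ Set.Iio κ.ord) := by
    intro k
    have h1 : (k : Ordinal) < Ordinal.omega0 := Ordinal.nat_lt_omega0 k
    have h2 : Ordinal.omega0 ≤ κ.ord := by rw [← Cardinal.ord_aleph0]; exact hω
    exact lt_of_lt_of_le h1 h2
  set base : ℕ → ↥(Set.Iio κ.ord) := fun k => ⟨(k : Ordinal), hbase k⟩ with hbased
  have hbmono : StrictMono base := by
    intro k l hkl
    simp only [hbased, Subtype.mk_lt_mk]
    exact_mod_cast hkl
  have hwf : WellFounded ((· < ·) : ↥(Set.Iio κ.ord) → ↥(Set.Iio κ.ord) → Prop) := by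
    have h0 : (InvImage ((· < ·) : Ordinal → Ordinal → Prop)
        (fun p : ↥(Set.Iio κ.ord) => p.val)) = ((· < ·) : ↥(Set.Iio κ.ord) → ↥(Set.Iio κ.ord) → Prop) := by
      funext p q
      simp only [InvImage, Subtype.coe_lt_coe]
    rw [← h0]
    exact InvImage.wf _ Ordinal.lt_wf
  obtain ⟨W, hW, hWinit⟩ := exists_W κ hκ
  obtain ⟨C1, hC1, hC1le⟩ := key_dir hx.1 hx.2 hy.1 hy.2 hbmono hxs hys e hW hWinit hwf
  obtain ⟨C2, hC2, hC2le⟩ := key_dir hy.1 hy.2 hx.1 hx.2 hbmono hys hxs e.symm hW hWinit hwf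
  refine ⟨max C1 C2, ?_⟩
  intro n a i hi
  have hCpos : 0 < max C1 C2 := lt_max_of_lt_left hC1
  have hx_eq : ‖∑ k, a k • x (i k)‖ = wn x base n a := wn_spread hx.1 hbmono a hi
  have hy_eq : ‖∑ k, a k • y (i k)‖ = wn y base n a := wn_spread hy.1 hbmono a hi
  constructor
  · rw [hx_eq, hy_eq]
    have h1 : wn x base n a ≤ (max C1 C2) * wn y base n a := by
      calc wn x base n a ≤ C2 * wn y base n a := hC2le n a
        _ ≤ (max C1 C2) * wn y base n a :=
            mul_le_mul_of_nonneg_right (le_max_right _ _) (wn_nonneg n a)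
    calc (max C1 C2)⁻¹ * wn x base n a
        ≤ (max C1 C2)⁻¹ * ((max C1 C2) * wn y base n a) :=
          mul_le_mul_of_nonneg_left h1 (inv_nonneg.mpr (le_of_lt hCpos))
      _ = wn y base n a := by
          rw [← mul_assoc, inv_mul_cancel₀ (ne_of_gt hCpos), one_mul]
  · rw [hx_eq, hy_eq]
    calc wn y base n a ≤ C1 * wn x base n a := hC1le n a
      _ ≤ (max C1 C2) * wn x base n a :=
          mul_le_mul_of_nonneg_right (le_max_left _ _) (wn_nonneg n a)

/-- Uniqueness of uncountable subsymmetric bases: if the closed spans of two subsymmetric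
`κ`-families (`κ` uncountable) are isomorphic Banach spaces, the families are equivalent. -/
theorem subsymmetric_families_equiv_of_isomorphic
    (κ : Cardinal) (hκ : Cardinal.aleph0 < κ)
    (X : Type) [NormedAddCommGroup X] [NormedSpace ℝ X] [CompleteSpace X]
    (Y : Type) [NormedAddCommGroup Y] [NormedSpace ℝ Y] [CompleteSpace Y]
    (x : ↥(Set.Iio κ.ord) → X) (y : ↥(Set.Iio κ.ord) → Y)
    (hx : IsSubsymmetricFam x) (hy : IsSubsymmetricFam y)
    (hxs : (Submodule.span ℝ (Set.range x)).topologicalClosure = ⊤)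
    (hys : (Submodule.span ℝ (Set.range y)).topologicalClosure = ⊤)
    (h : Nonempty (X ≃L[ℝ] Y)) :
    ∃ C : ℝ, FamEquiv C x y := by
  obtain ⟨C, hC⟩ := subsymmetric_families_equiv_of_isomorphic' κ hκ X Y x y
    ⟨hx.1, hx.2⟩ ⟨hy.1, hy.2⟩ hxs hys h
  exact ⟨C, hC⟩
end
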